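/- arXiv:2207.02635 — 6 statements merged into one kernel-verified Lean document; each statement's English description precedes it below -/
import Mathlib

section
/- Let I = [u₁, u_N] be a compact interval, F : I → 𝒦(ℝ) a continuous set-valued map into nonempty compact subsets of ℝ with the Hausdorff metric, Δ = {u₁ < u₂ < ... < u_N} a partition, L_n : I → [u_n, u_{n+1}] contractive homeomorphisms with L_n({u₁,u_N}) = {u_n, u_{n+1}}, S : I → 𝒦(ℝ) continuous with S(u₁) − F(u₁) = S(u_N) − F(u_N) (Minkowski difference as sets), and α ∈ ℝ with |α| < 1. Then there exists a unique continuous map F^α : I → 𝒦(ℝ) with F^α(u₁) − S(u₁) = F^α(u_N) − S(u_N) satisfying the self-referential equation F^α(u) = F(u) + α·(F^α(L_n⁻¹(u)) − S(L_n⁻¹(u))) for all u ∈ [u_n, u_{n+1}] and all n = 1, ..., N−1. -/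
open Set Pointwise TopologicalSpace

section SVFAux
open Set Pointwise TopologicalSpace Metric EMetric Function
open scoped NNReal ENNReal

lemma edist_sub_sub_le' (a b c d : ℝ) : edist (a - b) (c - d) ≤ edist a c + edist b d := by
  simpa [sub_eq_add_neg, edist_neg_neg] using edist_add_add_le a (-b) c (-d)

namespace SVF

lemma isCompact_sub' {B C : Set ℝ} (hB : IsCompact B) (hC : IsCompact C) :
    IsCompact (B - C) := by
  rw [sub_eq_add_neg]; exact hB.add hC.neg

noncomputable def comb (α : ℝ) (A B C : NonemptyCompacts ℝ) : NonemptyCompacts ℝ :=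
  ⟨⟨(A : Set ℝ) + α • ((B : Set ℝ) - (C : Set ℝ)),
    A.isCompact.add ((isCompact_sub' B.isCompact C.isCompact).smul α)⟩,
    A.nonempty.add ((B.nonempty.sub C.nonempty).smul_set)⟩

@[simp] lemma coe_comb (α : ℝ) (A B C : NonemptyCompacts ℝ) :
    (comb α A B C : Set ℝ) = (A : Set ℝ) + α • ((B : Set ℝ) - (C : Set ℝ)) := rfl

lemma comb_congr (α : ℝ) {A B C B' C' : NonemptyCompacts ℝ}
    (h : (B : Set ℝ) - (C : Set ℝ) = (B' : Set ℝ) - (C' : Set ℝ)) :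
    comb α A B C = comb α A B' C' :=
  NonemptyCompacts.ext (by simp [h])

lemma edist_nc (A B : NonemptyCompacts ℝ) :
    edist A B = hausdorffEdist (A : Set ℝ) (B : Set ℝ) := rfl

lemma exists_close (A B : NonemptyCompacts ℝ) :
    ∀ a ∈ (A : Set ℝ), ∃ b ∈ (B : Set ℝ), edist a b ≤ edist A B := by
  intro a ha
  obtain ⟨b, hb, hab⟩ := B.isCompact.exists_infEdist_eq_edist B.nonempty a
  exact ⟨b, hb, by rw [edist_nc, ← hab]; exact infEdist_le_hausdorffEdist_of_mem ha⟩

lemma comb_aux (α : ℝ) (A B C A' B' C' : NonemptyCompacts ℝ) :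
    ∀ x ∈ (comb α A B C : Set ℝ), ∃ y ∈ (comb α A' B' C' : Set ℝ),
      edist x y ≤ edist A A' + ‖α‖₊ * (edist B B' + edist C C') := by
  rintro x hx
  rw [coe_comb] at hx
  obtain ⟨a, ha, y, hy, rfl⟩ := Set.mem_add.mp hx
  obtain ⟨z, hz, rfl⟩ := hy
  obtain ⟨b, hb, c, hc, rfl⟩ := Set.mem_sub.mp hz
  obtain ⟨a', ha', haa⟩ := exists_close A A' a ha
  obtain ⟨b', hb', hbb⟩ := exists_close B B' b hb
  obtain ⟨c', hc', hcc⟩ := exists_close C C' c hc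
  refine ⟨a' + α • (b' - c'), ?_, ?_⟩
  · rw [coe_comb]
    exact add_mem_add ha' (smul_mem_smul_set (sub_mem_sub hb' hc'))
  · calc edist (a + α • (b - c)) (a' + α • (b' - c'))
        ≤ edist a a' + edist (α • (b - c)) (α • (b' - c')) := edist_add_add_le _ _ _ _
      _ = edist a a' + ‖α‖₊ * edist (b - c) (b' - c') := by
          rw [edist_smul₀]; rfl
      _ ≤ edist a a' + ‖α‖₊ * (edist b b' + edist c c') := by
          gcongr
          exact edist_sub_sub_le' _ _ _ _
      _ ≤ _ := by gcongr

lemma comb_edist_le (α : ℝ) (A B C A' B' C' : NonemptyCompacts ℝ) :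
    edist (comb α A B C) (comb α A' B' C') ≤
      edist A A' + ‖α‖₊ * (edist B B' + edist C C') := by
  rw [edist_nc]
  refine hausdorffEdist_le_of_mem_edist (comb_aux α A B C A' B' C') ?_
  have h := comb_aux α A' B' C' A B C
  simpa only [edist_comm A' A, edist_comm B' B, edist_comm C' C] using h

lemma comb_dist_le (α : ℝ) (A B C A' B' C' : NonemptyCompacts ℝ) :
    dist (comb α A B C) (comb α A' B' C') ≤
      dist A A' + ‖α‖ * (dist B B' + dist C C') := by
  have h := comb_edist_le α A B C A' B' C'
  have fin : edist A A' + ‖α‖₊ * (edist B B' + edist C C') ≠ ⊤ := by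
    refine ENNReal.add_ne_top.mpr ⟨edist_ne_top _ _, ENNReal.mul_ne_top ENNReal.coe_ne_top ?_⟩
    exact ENNReal.add_ne_top.mpr ⟨edist_ne_top _ _, edist_ne_top _ _⟩
  rw [dist_edist, dist_edist, dist_edist, dist_edist]
  refine le_trans (ENNReal.toReal_mono fin h) ?_
  rw [ENNReal.toReal_add (by exact edist_ne_top _ _)
      (ENNReal.mul_ne_top ENNReal.coe_ne_top
        (ENNReal.add_ne_top.mpr ⟨edist_ne_top _ _, edist_ne_top _ _⟩)),
    ENNReal.toReal_mul,
    ENNReal.toReal_add (edist_ne_top _ _) (edist_ne_top _ _)]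
  simp [coe_nnnorm]

lemma comb_lipschitz (α : ℝ) :
    LipschitzWith (1 + ‖α‖₊ + ‖α‖₊)
      (fun p : NonemptyCompacts ℝ × NonemptyCompacts ℝ × NonemptyCompacts ℝ =>
        comb α p.1 p.2.1 p.2.2) := by
  intro p q
  refine le_trans (comb_edist_le α _ _ _ _ _ _) ?_
  have h1 : edist p.1 q.1 ≤ edist p q := le_max_left _ _
  have h2 : edist p.2.1 q.2.1 ≤ edist p q :=
    le_trans (le_max_left _ _) (le_max_right _ _)
  have h3 : edist p.2.2 q.2.2 ≤ edist p q :=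
    le_trans (le_max_right _ _) (le_max_right _ _)
  calc edist p.1 q.1 + ‖α‖₊ * (edist p.2.1 q.2.1 + edist p.2.2 q.2.2)
      ≤ edist p q + ‖α‖₊ * (edist p q + edist p q) := by gcongr
    _ = (1 + ‖α‖₊ + ‖α‖₊ : ℝ≥0) * edist p q := by push_cast; ring
  
noncomputable def nsub (A B : NonemptyCompacts ℝ) : NonemptyCompacts ℝ :=
  ⟨⟨(A : Set ℝ) - (B : Set ℝ), isCompact_sub' A.isCompact B.isCompact⟩,
    A.nonempty.sub B.nonempty⟩

@[simp] lemma coe_nsub (A B : NonemptyCompacts ℝ) :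
    (nsub A B : Set ℝ) = (A : Set ℝ) - (B : Set ℝ) := rfl

lemma nsub_lipschitz (C : NonemptyCompacts ℝ) :
    LipschitzWith 1 (fun A : NonemptyCompacts ℝ => nsub A C) := by
  intro A B
  rw [ENNReal.coe_one, one_mul, edist_nc (nsub A C)]
  have aux : ∀ (X Y : NonemptyCompacts ℝ), ∀ x ∈ (nsub X C : Set ℝ),
      ∃ y ∈ (nsub Y C : Set ℝ), edist x y ≤ edist X Y := by
    intro X Y x hx
    obtain ⟨a, ha, c, hc, rfl⟩ := Set.mem_sub.mp hx
    obtain ⟨a', ha', haa⟩ := exists_close X Y a ha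
    refine ⟨a' - c, sub_mem_sub ha' hc, ?_⟩
    calc edist (a - c) (a' - c) ≤ edist a a' + edist c c := edist_sub_sub_le' _ _ _ _
      _ ≤ edist X Y := by simpa using haa
  refine hausdorffEdist_le_of_mem_edist (aux A B) ?_
  simpa only [edist_comm B A] using aux B A

end SVF

end SVFAux

open Classical in
noncomputable def SVF.idx (N : ℕ) (u : ℕ → ℝ) (x : ℝ) : ℕ :=
  Nat.findGreatest (fun n => u n ≤ x) (N - 2)

noncomputable def SVF.T0 (α : ℝ) (F S : ℝ → NonemptyCompacts ℝ) (Linv : ℕ → ℝ → ℝ)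
    (N : ℕ) (u : ℕ → ℝ) (G : ℝ → NonemptyCompacts ℝ) (x : ℝ) : NonemptyCompacts ℝ :=
  SVF.comb α (F x) (G (Linv (SVF.idx N u x) x)) (S (Linv (SVF.idx N u x) x))

noncomputable def SVF.extIcc (a b : ℝ) (hab : a ≤ b)
    (f : C(Set.Icc a b, NonemptyCompacts ℝ)) (x : ℝ) : NonemptyCompacts ℝ :=
  f (Set.projIcc a b hab x)


/-- Existence and uniqueness of the set-valued `α`-fractal function.  Let
`I = [u 0, u (N-1)]`, `F : I → 𝒦(ℝ)` continuous (Hausdorff metric),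
`L n : I → [u n, u (n+1)]` contractive homeomorphisms (with inverses `Linv n`)
matching the endpoints, `S : I → 𝒦(ℝ)` continuous with
`S(u 0) − F(u 0) = S(u (N-1)) − F(u (N-1))` (Minkowski difference of sets), and
`|α| < 1`.  Then there is a unique continuous `Fα : I → 𝒦(ℝ)` with
`Fα(u 0) − S(u 0) = Fα(u (N-1)) − S(u (N-1))` satisfying the self-referential equation
`Fα(x) = F(x) + α • (Fα(Linv n x) − S(Linv n x))` on each `[u n, u (n+1)]`. -/
theorem exists_unique_setValued_alpha_fractal
    (N : ℕ) (hN : 2 ≤ N) (u : ℕ → ℝ) (hu : ∀ n, n < N - 1 → u n < u (n + 1))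
    (F S : ℝ → NonemptyCompacts ℝ)
    (hF : ContinuousOn F (Icc (u 0) (u (N - 1))))
    (hS : ContinuousOn S (Icc (u 0) (u (N - 1))))
    (hFS : (S (u 0) : Set ℝ) - (F (u 0) : Set ℝ)
         = (S (u (N - 1)) : Set ℝ) - (F (u (N - 1)) : Set ℝ))
    (L Linv : ℕ → ℝ → ℝ)
    (hLmaps : ∀ n, n < N - 1 → MapsTo (L n) (Icc (u 0) (u (N - 1))) (Icc (u n) (u (n + 1))))
    (hLcontr : ∀ n, n < N - 1 → ∃ c : ℝ, c < 1 ∧ ∀ x ∈ Icc (u 0) (u (N - 1)),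
        ∀ y ∈ Icc (u 0) (u (N - 1)), |L n x - L n y| ≤ c * |x - y|)
    (hLcont : ∀ n, n < N - 1 → ContinuousOn (L n) (Icc (u 0) (u (N - 1))))
    (hLinvcont : ∀ n, n < N - 1 → ContinuousOn (Linv n) (Icc (u n) (u (n + 1))))
    (hLinvL : ∀ n, n < N - 1 → ∀ x ∈ Icc (u 0) (u (N - 1)), Linv n (L n x) = x)
    (hLLinv : ∀ n, n < N - 1 → ∀ y ∈ Icc (u n) (u (n + 1)),
        L n (Linv n y) = y ∧ Linv n y ∈ Icc (u 0) (u (N - 1)))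
    (hLend : ∀ n, n < N - 1 →
        (L n (u 0) = u n ∧ L n (u (N - 1)) = u (n + 1)) ∨
        (L n (u 0) = u (n + 1) ∧ L n (u (N - 1)) = u n))
    (α : ℝ) (hα : |α| < 1) :
    ∃ Fα : ℝ → NonemptyCompacts ℝ,
      (ContinuousOn Fα (Icc (u 0) (u (N - 1))) ∧
        (Fα (u 0) : Set ℝ) - (S (u 0) : Set ℝ)
          = (Fα (u (N - 1)) : Set ℝ) - (S (u (N - 1)) : Set ℝ) ∧
        ∀ n, n < N - 1 → ∀ x ∈ Icc (u n) (u (n + 1)),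
          (Fα x : Set ℝ) = (F x : Set ℝ)
            + α • ((Fα (Linv n x) : Set ℝ) - (S (Linv n x) : Set ℝ))) ∧
      ∀ G : ℝ → NonemptyCompacts ℝ,
        (ContinuousOn G (Icc (u 0) (u (N - 1))) ∧
          (G (u 0) : Set ℝ) - (S (u 0) : Set ℝ)
            = (G (u (N - 1)) : Set ℝ) - (S (u (N - 1)) : Set ℝ) ∧
          ∀ n, n < N - 1 → ∀ x ∈ Icc (u n) (u (n + 1)),
            (G x : Set ℝ) = (F x : Set ℝ)
              + α • ((G (Linv n x) : Set ℝ) - (S (Linv n x) : Set ℝ))) →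
        ∀ x ∈ Icc (u 0) (u (N - 1)), G x = Fα x := by
  classical
  -- monotonicity facts
  have hmono : ∀ l : ℕ, l ≤ N - 1 → ∀ k, k ≤ l → u k ≤ u l := by
    intro l
    induction l with
    | zero => intro _ k hk; rw [Nat.le_zero.mp hk]
    | succ m ih =>
      intro hl k hk
      rcases Nat.eq_or_lt_of_le hk with rfl | h
      · exact le_rfl
      · exact le_trans (ih (by omega) k (by omega)) (hu m (by omega)).le
  have hsmono : ∀ k l : ℕ, k < l → l ≤ N - 1 → u k < u l := by
    intro k l hkl hl
    have h1 : u k ≤ u (l - 1) := hmono (l - 1) (by omega) k (by omega)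
    have h2 := hu (l - 1) (by omega)
    rw [Nat.sub_add_cancel (by omega)] at h2
    exact lt_of_le_of_lt h1 h2
  have hab : u 0 ≤ u (N - 1) := hmono (N - 1) le_rfl 0 (Nat.zero_le _)
  have haI : u 0 ∈ Icc (u 0) (u (N - 1)) := left_mem_Icc.mpr hab
  have hbI : u (N - 1) ∈ Icc (u 0) (u (N - 1)) := right_mem_Icc.mpr hab
  have hpiece : ∀ n, n < N - 1 → Icc (u n) (u (n + 1)) ⊆ Icc (u 0) (u (N - 1)) :=
    fun n hn => Icc_subset_Icc (hmono n (by omega) 0 (Nat.zero_le _))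
      (hmono (N - 1) le_rfl (n + 1) (by omega))
  -- index function facts
  have hidx : ∀ x ∈ Icc (u 0) (u (N - 1)),
      SVF.idx N u x < N - 1 ∧ x ∈ Icc (u (SVF.idx N u x)) (u (SVF.idx N u x + 1)) := by
    intro x hx
    unfold SVF.idx
    have hle : Nat.findGreatest (fun n => u n ≤ x) (N - 2) ≤ N - 2 := Nat.findGreatest_le _
    have hspec : u (Nat.findGreatest (fun n => u n ≤ x) (N - 2)) ≤ x :=
      Nat.findGreatest_spec (P := fun n => u n ≤ x) (Nat.zero_le _) hx.1
    refine ⟨by omega, hspec, ?_⟩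
    rcases Nat.eq_or_lt_of_le hle with heq | hlt
    · have h : Nat.findGreatest (fun n => u n ≤ x) (N - 2) + 1 = N - 1 := by omega
      rw [h]; exact hx.2
    · by_contra hcon
      push_neg at hcon
      have : Nat.findGreatest (fun n => u n ≤ x) (N - 2) + 1
          ≤ Nat.findGreatest (fun n => u n ≤ x) (N - 2) :=
        Nat.le_findGreatest (by omega) hcon.le
      omega
  -- endpoint inverses
  have heinv : ∀ n, n < N - 1 →
      (Linv n (u n) = u 0 ∨ Linv n (u n) = u (N - 1)) ∧
      (Linv n (u (n + 1)) = u 0 ∨ Linv n (u (n + 1)) = u (N - 1)) := by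
    intro n hn
    rcases hLend n hn with ⟨h1, h2⟩ | ⟨h1, h2⟩
    · exact ⟨Or.inl (by rw [← h1, hLinvL n hn _ haI]),
        Or.inr (by rw [← h2, hLinvL n hn _ hbI])⟩
    · exact ⟨Or.inr (by rw [← h2, hLinvL n hn _ hbI]),
        Or.inl (by rw [← h1, hLinvL n hn _ haI])⟩
  -- consistency of the defining data at overlapping points
  have hkey : ∀ G : ℝ → NonemptyCompacts ℝ,
      ((G (u 0) : Set ℝ) - (S (u 0) : Set ℝ)
        = (G (u (N - 1)) : Set ℝ) - (S (u (N - 1)) : Set ℝ)) →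
      ∀ n m : ℕ, n < N - 1 → m < N - 1 → n < m →
      ∀ x, x ∈ Icc (u n) (u (n + 1)) → x ∈ Icc (u m) (u (m + 1)) →
      ((G (Linv n x) : Set ℝ) - (S (Linv n x) : Set ℝ))
        = (G (Linv m x) : Set ℝ) - (S (Linv m x) : Set ℝ) := by
    intro G hG n m hn hm hnm x hxn hxm
    have h1 : u m ≤ u (n + 1) := le_trans hxm.1 hxn.2
    have hm1 : m = n + 1 := by
      by_contra h
      exact absurd (hsmono (n + 1) m (by omega) (by omega)) (not_lt.mpr h1)
    subst hm1
    have hx1 : x = u (n + 1) := le_antisymm hxn.2 hxm.1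
    subst hx1
    rcases (heinv n hn).2 with h | h <;> rcases (heinv (n + 1) hm).1 with h' | h' <;>
      rw [h, h']
    · exact hG
    · exact hG.symm
  have hval : ∀ G : ℝ → NonemptyCompacts ℝ,
      ((G (u 0) : Set ℝ) - (S (u 0) : Set ℝ)
        = (G (u (N - 1)) : Set ℝ) - (S (u (N - 1)) : Set ℝ)) →
      ∀ n m : ℕ, n < N - 1 → m < N - 1 →
      ∀ x, x ∈ Icc (u n) (u (n + 1)) → x ∈ Icc (u m) (u (m + 1)) →
      ((G (Linv n x) : Set ℝ) - (S (Linv n x) : Set ℝ))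
        = (G (Linv m x) : Set ℝ) - (S (Linv m x) : Set ℝ) := by
    intro G hG n m hn hm x hxn hxm
    rcases lt_trichotomy n m with h | rfl | h
    · exact hkey G hG n m hn hm h x hxn hxm
    · rfl
    · exact (hkey G hG m n hm hn h x hxm hxn).symm
  -- T0 agrees with any admissible index
  have heqT0 : ∀ G : ℝ → NonemptyCompacts ℝ,
      ((G (u 0) : Set ℝ) - (S (u 0) : Set ℝ)
        = (G (u (N - 1)) : Set ℝ) - (S (u (N - 1)) : Set ℝ)) →
      ∀ n, n < N - 1 → ∀ x ∈ Icc (u n) (u (n + 1)),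
      SVF.T0 α F S Linv N u G x = SVF.comb α (F x) (G (Linv n x)) (S (Linv n x)) := by
    intro G hG n hn x hx
    obtain ⟨h1, h2⟩ := hidx x (hpiece n hn hx)
    exact SVF.comb_congr α (hval G hG _ n h1 hn x h2 hx)
  -- continuity of T0 G
  have hcontT0 : ∀ G : ℝ → NonemptyCompacts ℝ, ContinuousOn G (Icc (u 0) (u (N - 1))) →
      ((G (u 0) : Set ℝ) - (S (u 0) : Set ℝ)
        = (G (u (N - 1)) : Set ℝ) - (S (u (N - 1)) : Set ℝ)) →
      ContinuousOn (SVF.T0 α F S Linv N u G) (Icc (u 0) (u (N - 1))) := by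
    intro G hGc hGe
    have hcover : Icc (u 0) (u (N - 1)) = ⋃ i : Fin (N - 1), Icc (u i) (u (i + 1)) := by
      ext x
      constructor
      · intro hx
        obtain ⟨h1, h2⟩ := hidx x hx
        exact mem_iUnion.mpr ⟨⟨SVF.idx N u x, h1⟩, h2⟩
      · intro hx
        obtain ⟨i, hi⟩ := mem_iUnion.mp hx
        exact hpiece i i.2 hi
    rw [hcover]
    refine (locallyFinite_of_finite _).continuousOn_iUnion (fun _ => isClosed_Icc) (fun i => ?_)
    refine ContinuousOn.congr ?_ (fun x hx => heqT0 G hGe i i.2 x hx)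
    have hmap : MapsTo (Linv i) (Icc (u i) (u (i + 1))) (Icc (u 0) (u (N - 1))) :=
      fun y hy => (hLLinv i i.2 y hy).2
    have hLc := hLinvcont i i.2
    have htriple : ContinuousOn (fun x => ((F x, G (Linv i x), S (Linv i x)) :
        NonemptyCompacts ℝ × NonemptyCompacts ℝ × NonemptyCompacts ℝ))
        (Icc (u i) (u (i + 1))) :=
      (hF.mono (hpiece i i.2)).prodMk ((hGc.comp hLc hmap).prodMk (hS.comp hLc hmap))
    exact (SVF.comb_lipschitz α).continuous.comp_continuousOn htriple
  -- the F endpoint identity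
  have hFSab : (F (u 0) : Set ℝ) - (S (u 0) : Set ℝ)
      = (F (u (N - 1)) : Set ℝ) - (S (u (N - 1)) : Set ℝ) := by
    have h := congrArg (fun s : Set ℝ => -s) hFS
    simpa only [neg_sub] using h
  -- T0 preserves the endpoint condition
  have hendT0 : ∀ G : ℝ → NonemptyCompacts ℝ,
      ((G (u 0) : Set ℝ) - (S (u 0) : Set ℝ)
        = (G (u (N - 1)) : Set ℝ) - (S (u (N - 1)) : Set ℝ)) →
      ((SVF.T0 α F S Linv N u G (u 0) : Set ℝ) - (S (u 0) : Set ℝ)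
        = (SVF.T0 α F S Linv N u G (u (N - 1)) : Set ℝ) - (S (u (N - 1)) : Set ℝ)) := by
    intro G hG
    have h0 : u 0 ∈ Icc (u 0) (u 1) := left_mem_Icc.mpr (hmono 1 (by omega) 0 (by omega))
    have hNm2 : N - 2 + 1 = N - 1 := by omega
    have hb' : u (N - 1) ∈ Icc (u (N - 2)) (u (N - 2 + 1)) := by
      rw [hNm2]; exact right_mem_Icc.mpr (hmono (N - 1) le_rfl (N - 2) (by omega))
    rw [heqT0 G hG 0 (by omega) (u 0) h0, heqT0 G hG (N - 2) (by omega) (u (N - 1)) hb']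
    have he0 := (heinv 0 (by omega)).1
    have he2 : Linv (N - 2) (u (N - 1)) = u 0 ∨ Linv (N - 2) (u (N - 1)) = u (N - 1) := by
      have h := (heinv (N - 2) (by omega)).2
      rwa [hNm2] at h
    have hGeq : (G (Linv 0 (u 0)) : Set ℝ) - (S (Linv 0 (u 0)) : Set ℝ)
        = (G (Linv (N - 2) (u (N - 1))) : Set ℝ) - (S (Linv (N - 2) (u (N - 1))) : Set ℝ) := by
      rcases he0 with h | h <;> rcases he2 with h' | h' <;> rw [h, h']
      · exact hG
      · exact hG.symm
    rw [SVF.coe_comb, SVF.coe_comb, hGeq]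
    have rearr : ∀ A C W : Set ℝ, (A + W) - C = (A - C) + W := by
      intro A C W
      rw [sub_eq_add_neg, sub_eq_add_neg, add_right_comm]
    rw [rearr, rearr, hFSab]
  -- set up the complete metric space of continuous set-valued maps
  haveI : CompactSpace (Icc (u 0) (u (N - 1))) := isCompact_iff_compactSpace.mp isCompact_Icc
  set XS : Set C(Icc (u 0) (u (N - 1)), NonemptyCompacts ℝ) :=
    {f | (f ⟨u 0, haI⟩ : Set ℝ) - (S (u 0) : Set ℝ)
       = (f ⟨u (N - 1), hbI⟩ : Set ℝ) - (S (u (N - 1)) : Set ℝ)} with hXS_def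
  have hXSc : IsClosed XS := by
    have hrw : XS = {f : C(Icc (u 0) (u (N - 1)), NonemptyCompacts ℝ) |
        SVF.nsub (f ⟨u 0, haI⟩) (S (u 0)) = SVF.nsub (f ⟨u (N - 1), hbI⟩) (S (u (N - 1)))} := by
      ext f
      constructor
      · intro h
        exact NonemptyCompacts.ext (by simpa [hXS_def] using h)
      · intro h
        simpa [hXS_def] using congrArg (fun t : NonemptyCompacts ℝ => (t : Set ℝ)) h
    rw [hrw]
    exact isClosed_eq
      ((SVF.nsub_lipschitz (S (u 0))).continuous.comp (continuous_eval_const _))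
      ((SVF.nsub_lipschitz (S (u (N - 1)))).continuous.comp (continuous_eval_const _))
  haveI : CompleteSpace XS := hXSc.completeSpace_coe
  -- extension facts
  have hext_cont : ∀ f : C(Icc (u 0) (u (N - 1)), NonemptyCompacts ℝ),
      Continuous (SVF.extIcc (u 0) (u (N - 1)) hab f) :=
    fun f => f.continuous.comp continuous_projIcc
  have hext_eq : ∀ f : C(Icc (u 0) (u (N - 1)), NonemptyCompacts ℝ),
      ∀ x (hx : x ∈ Icc (u 0) (u (N - 1))),
      SVF.extIcc (u 0) (u (N - 1)) hab f x = f ⟨x, hx⟩ := by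
    intro f x hx
    unfold SVF.extIcc
    rw [projIcc_of_mem]
  have hext_end : ∀ f : C(Icc (u 0) (u (N - 1)), NonemptyCompacts ℝ), f ∈ XS →
      ((SVF.extIcc (u 0) (u (N - 1)) hab f (u 0) : Set ℝ) - (S (u 0) : Set ℝ)
        = (SVF.extIcc (u 0) (u (N - 1)) hab f (u (N - 1)) : Set ℝ)
          - (S (u (N - 1)) : Set ℝ)) := by
    intro f hf
    rw [hext_eq f _ haI, hext_eq f _ hbI]
    exact hf
  -- the Hutchinson-type operator
  set T : XS → XS := fun f =>
    ⟨⟨(Icc (u 0) (u (N - 1))).restrict (SVF.T0 α F S Linv N u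
        (SVF.extIcc (u 0) (u (N - 1)) hab (f : C(Icc (u 0) (u (N - 1)), NonemptyCompacts ℝ)))),
      continuousOn_iff_continuous_restrict.mp
        (hcontT0 _ (hext_cont _).continuousOn (hext_end _ f.2))⟩,
      hendT0 _ (hext_end _ f.2)⟩ with hT_def
  haveI : Nonempty XS :=
    ⟨⟨⟨(Icc (u 0) (u (N - 1))).restrict F, continuousOn_iff_continuous_restrict.mp hF⟩, hFSab⟩⟩
  have hK : ‖α‖₊ < 1 := by
    rw [← Real.norm_eq_abs] at hα
    exact_mod_cast hα
  have hTc : ContractingWith ‖α‖₊ T := by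
    refine ⟨hK, ?_⟩
    suffices H : ∀ f g : XS, dist (T f) (T g) ≤ ‖α‖₊ * dist f g by
      intro f g
      have := (LipschitzWith.of_dist_le_mul H) f g
      exact this
    intro f g
    rw [Subtype.dist_eq, Subtype.dist_eq, coe_nnnorm,
      ContinuousMap.dist_le (mul_nonneg (norm_nonneg α) dist_nonneg)]
    intro x
    obtain ⟨hn, hxmem⟩ := hidx (x : ℝ) x.2
    have hyI : Linv (SVF.idx N u (x : ℝ)) (x : ℝ) ∈ Icc (u 0) (u (N - 1)) :=
      (hLLinv _ hn _ hxmem).2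
    calc dist ((T f : C(Icc (u 0) (u (N - 1)), NonemptyCompacts ℝ)) x)
          ((T g : C(Icc (u 0) (u (N - 1)), NonemptyCompacts ℝ)) x)
        ≤ dist (F (x : ℝ)) (F (x : ℝ)) + ‖α‖ *
            (dist (SVF.extIcc (u 0) (u (N - 1)) hab (f : C(_, _)) (Linv (SVF.idx N u (x:ℝ)) (x:ℝ)))
                  (SVF.extIcc (u 0) (u (N - 1)) hab (g : C(_, _)) (Linv (SVF.idx N u (x:ℝ)) (x:ℝ)))
              + dist (S (Linv (SVF.idx N u (x:ℝ)) (x:ℝ))) (S (Linv (SVF.idx N u (x:ℝ)) (x:ℝ)))) :=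
          SVF.comb_dist_le α _ _ _ _ _ _
      _ = ‖α‖ * dist ((f : C(Icc (u 0) (u (N - 1)), NonemptyCompacts ℝ)) ⟨_, hyI⟩)
            ((g : C(Icc (u 0) (u (N - 1)), NonemptyCompacts ℝ)) ⟨_, hyI⟩) := by
          rw [dist_self, dist_self, hext_eq _ _ hyI, hext_eq _ _ hyI]
          ring
      _ ≤ ‖α‖ * dist (f : C(Icc (u 0) (u (N - 1)), NonemptyCompacts ℝ))
            (g : C(Icc (u 0) (u (N - 1)), NonemptyCompacts ℝ)) := by
          gcongr
          exact ContinuousMap.dist_apply_le_dist _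
  -- the fixed point
  set f₀ : XS := ContractingWith.fixedPoint T hTc with hf₀_def
  have hfix : T f₀ = f₀ := hTc.fixedPoint_isFixedPt
  set Fα : ℝ → NonemptyCompacts ℝ :=
    SVF.extIcc (u 0) (u (N - 1)) hab (f₀ : C(Icc (u 0) (u (N - 1)), NonemptyCompacts ℝ))
    with hFα_def
  have hFαT0 : ∀ x ∈ Icc (u 0) (u (N - 1)),
      Fα x = SVF.T0 α F S Linv N u Fα x := by
    intro x hx
    have h1 : Fα x = (f₀ : C(Icc (u 0) (u (N - 1)), NonemptyCompacts ℝ)) ⟨x, hx⟩ :=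
      hext_eq _ x hx
    have h2 : ((T f₀ : XS) : C(Icc (u 0) (u (N - 1)), NonemptyCompacts ℝ)) ⟨x, hx⟩
        = (f₀ : C(Icc (u 0) (u (N - 1)), NonemptyCompacts ℝ)) ⟨x, hx⟩ := by rw [hfix]
    rw [h1, ← h2]
    rfl
  refine ⟨Fα, ⟨(hext_cont _).continuousOn, hext_end _ f₀.2, ?_⟩, ?_⟩
  · intro n hn x hx
    rw [hFαT0 x (hpiece n hn hx), heqT0 Fα (hext_end _ f₀.2) n hn x hx]
    rfl
  · rintro G ⟨hGc, hGe, hGeq⟩ x hx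
    set g : C(Icc (u 0) (u (N - 1)), NonemptyCompacts ℝ) :=
      ⟨(Icc (u 0) (u (N - 1))).restrict G, continuousOn_iff_continuous_restrict.mp hGc⟩
      with hg_def
    have hgXS : g ∈ XS := hGe
    have hfixg : T ⟨g, hgXS⟩ = ⟨g, hgXS⟩ := by
      apply Subtype.ext
      apply ContinuousMap.ext
      intro z
      obtain ⟨hn, hzmem⟩ := hidx (z : ℝ) z.2
      have hyz : Linv (SVF.idx N u (z : ℝ)) (z : ℝ) ∈ Icc (u 0) (u (N - 1)) :=
        (hLLinv _ hn _ hzmem).2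
      apply NonemptyCompacts.ext
      show (SVF.T0 α F S Linv N u (SVF.extIcc (u 0) (u (N - 1)) hab g) (z : ℝ) : Set ℝ)
        = (G (z : ℝ) : Set ℝ)
      rw [heqT0 _ (hext_end g hgXS) _ hn _ hzmem, SVF.coe_comb, hext_eq g _ hyz]
      exact (hGeq _ hn _ hzmem).symm
    have huniq : (⟨g, hgXS⟩ : XS) = f₀ := hTc.fixedPoint_unique hfixg
    have h3 : G x = (f₀ : C(Icc (u 0) (u (N - 1)), NonemptyCompacts ℝ)) ⟨x, hx⟩ := by
      rw [← huniq]
      rfl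
    show G x = Fα x
    rw [hFα_def, hext_eq _ x hx]
    exact h3
end

section
/- Let F, T : [0,1] → 𝒦(ℝ) be set-valued maps with F Lipschitz with constant l, and assume T takes values in bounded sets with M := max{1 + l·sup{|z| : z ∈ ⋃_u T(u)}, sup{|v| : v ∈ ⋃_w F(w)}} < ∞. Then the map Φ : 𝒢(T) → 𝒢(FT), Φ(u, T(u)) = (u, F(u)·T(u)) (elementwise product), is surjective and Lipschitz with constant M; consequently dim_H(𝒢(FT)) ≤ dim_H(𝒢(T)). -/
open Set Pointwise TopologicalSpace

private lemma haus_mul_aux {A C B : Set ℝ} (hA : IsCompact A) (hC : IsCompact C)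
    (hAne : A.Nonempty) (hCne : C.Nonempty) {d r : ℝ}
    (hd : Metric.hausdorffDist A C ≤ d)
    (hb : ∀ b ∈ B, |b| * d ≤ r) (hr : 0 ≤ r) :
    Metric.hausdorffDist (A * B) (C * B) ≤ r := by
  have hfin : EMetric.hausdorffEdist A C ≠ ⊤ :=
    Metric.hausdorffEdist_ne_top_of_nonempty_of_bounded hAne hCne hA.isBounded hC.isBounded
  apply Metric.hausdorffDist_le_of_mem_dist hr
  · rintro x hx
    rw [Set.mem_mul] at hx
    obtain ⟨a, ha, b, hbB, rfl⟩ := hx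
    obtain ⟨c, hc, hac⟩ := hC.exists_infDist_eq_dist hCne a
    refine ⟨c * b, Set.mul_mem_mul hc hbB, ?_⟩
    have h1 : dist a c ≤ d := by
      rw [← hac]
      exact le_trans (Metric.infDist_le_hausdorffDist_of_mem ha hfin) hd
    have : dist (a * b) (c * b) = dist a c * |b| := by
      rw [Real.dist_eq, Real.dist_eq, ← abs_mul]
      ring_nf
    rw [this]
    calc dist a c * |b| ≤ d * |b| := by
            exact mul_le_mul_of_nonneg_right h1 (abs_nonneg b)
      _ = |b| * d := mul_comm _ _
      _ ≤ r := hb b hbB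
  · rintro x hx
    rw [Set.mem_mul] at hx
    obtain ⟨c, hc, b, hbB, rfl⟩ := hx
    obtain ⟨a, ha, hac⟩ := hA.exists_infDist_eq_dist hAne c
    refine ⟨a * b, Set.mul_mem_mul ha hbB, ?_⟩
    have h1 : dist c a ≤ d := by
      rw [← hac]
      refine le_trans (Metric.infDist_le_hausdorffDist_of_mem hc ?_) ?_
      · rwa [EMetric.hausdorffEdist_comm]
      · rwa [Metric.hausdorffDist_comm]
    have : dist (a * b) (c * b) = dist c a * |b| := by
      rw [Real.dist_eq, Real.dist_eq, ← abs_mul, abs_sub_comm]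
      ring_nf
    rw [dist_comm, this]
    calc dist c a * |b| ≤ d * |b| := mul_le_mul_of_nonneg_right h1 (abs_nonneg b)
      _ = |b| * d := mul_comm _ _
      _ ≤ r := hb b hbB

/-- Let `F, T : [0,1] → 𝒦(ℝ)` with `F` Lipschitz (constant `l`, Hausdorff metric), and let
`FT` be the pointwise elementwise product `(FT)(u) = F(u)·T(u)`.  With
`M = max{1 + l·sup{|z| : z ∈ ⋃ T(u)}, sup{|v| : v ∈ ⋃ F(w)}}`, the map
`Φ(u, T(u)) = (u, F(u)·T(u))` from `𝒢(T)` onto `𝒢(FT)` is surjective and Lipschitz with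
constant `M` for the metric `D((u,A),(w,B)) = |u−w| + H(A,B)`; consequently
`dim_H 𝒢(FT) ≤ dim_H 𝒢(T)`. -/
theorem dimH_graph_pointwise_mul_le (F T FT : ℝ → NonemptyCompacts ℝ) (l M : ℝ)
    (hF : ∀ u ∈ Icc (0 : ℝ) 1, ∀ w ∈ Icc (0 : ℝ) 1, dist (F u) (F w) ≤ l * |u - w|)
    (hFT : ∀ u, (FT u : Set ℝ) = (F u : Set ℝ) * (T u : Set ℝ))
    (hM1 : ∀ u ∈ Icc (0 : ℝ) 1, ∀ z ∈ (T u : Set ℝ), 1 + l * |z| ≤ M)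
    (hM2 : ∀ w ∈ Icc (0 : ℝ) 1, ∀ v ∈ (F w : Set ℝ), |v| ≤ M) :
    ({p : ℝ × NonemptyCompacts ℝ | ∃ u ∈ Icc (0 : ℝ) 1, p = (u, FT u)}
        = (fun p : ℝ × NonemptyCompacts ℝ => (p.1, FT p.1)) ''
            {p : ℝ × NonemptyCompacts ℝ | ∃ u ∈ Icc (0 : ℝ) 1, p = (u, T u)}) ∧
      (∀ u ∈ Icc (0 : ℝ) 1, ∀ w ∈ Icc (0 : ℝ) 1,
        |u - w| + dist (FT u) (FT w) ≤ M * (|u - w| + dist (T u) (T w))) ∧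
      dimH {p : ℝ × NonemptyCompacts ℝ | ∃ u ∈ Icc (0 : ℝ) 1, p = (u, FT u)} ≤
        dimH {p : ℝ × NonemptyCompacts ℝ | ∃ u ∈ Icc (0 : ℝ) 1, p = (u, T u)} := by
  -- l ≥ 0
  have hl : 0 ≤ l := by
    have h01 := hF 0 (by norm_num) 1 (by norm_num)
    have h0 : (0:ℝ) ≤ dist (F 0) (F 1) := dist_nonneg
    simp only [zero_sub, abs_neg, abs_one, mul_one] at h01
    linarith
  -- M ≥ 1
  have hM : 1 ≤ M := by
    obtain ⟨z, hz⟩ := (T 0).nonempty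
    have := hM1 0 (by norm_num) z hz
    nlinarith [abs_nonneg z]
  -- key Lipschitz estimate
  have key : ∀ u ∈ Icc (0 : ℝ) 1, ∀ w ∈ Icc (0 : ℝ) 1,
      |u - w| + dist (FT u) (FT w) ≤ M * (|u - w| + dist (T u) (T w)) := by
    intro u hu w hw
    have hTd : (0:ℝ) ≤ dist (T u) (T w) := dist_nonneg
    have habs : (0:ℝ) ≤ |u - w| := abs_nonneg _
    have h1 : Metric.hausdorffDist ((F u : Set ℝ) * (T u : Set ℝ))
        ((F w : Set ℝ) * (T u : Set ℝ)) ≤ (M - 1) * |u - w| := by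
      refine haus_mul_aux (d := l * |u - w|) (F u).isCompact (F w).isCompact
        (F u).nonempty (F w).nonempty ?_ ?_ ?_
      · rw [← Metric.NonemptyCompacts.dist_eq]; exact hF u hu w hw
      · intro b hb
        have := hM1 u hu b hb
        nlinarith [abs_nonneg b]
      · nlinarith
    have h2 : Metric.hausdorffDist ((F w : Set ℝ) * (T u : Set ℝ))
        ((F w : Set ℝ) * (T w : Set ℝ)) ≤ M * dist (T u) (T w) := by
      rw [mul_comm (F w : Set ℝ) (T u : Set ℝ), mul_comm (F w : Set ℝ) (T w : Set ℝ)]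
      refine haus_mul_aux (d := dist (T u) (T w)) (T u).isCompact (T w).isCompact
        (T u).nonempty (T w).nonempty ?_ ?_ ?_
      · rw [← Metric.NonemptyCompacts.dist_eq]
      · intro v hv
        have := hM2 w hw v hv
        nlinarith [abs_nonneg v]
      · nlinarith
    have hfin : EMetric.hausdorffEdist ((F u : Set ℝ) * (T u : Set ℝ))
        ((F w : Set ℝ) * (T u : Set ℝ)) ≠ ⊤ :=
      Metric.hausdorffEdist_ne_top_of_nonempty_of_bounded
        ((F u).nonempty.mul (T u).nonempty) ((F w).nonempty.mul (T u).nonempty)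
        ((F u).isCompact.mul (T u).isCompact).isBounded
        ((F w).isCompact.mul (T u).isCompact).isBounded
    have htri : dist (FT u) (FT w) ≤ (M - 1) * |u - w| + M * dist (T u) (T w) := by
      rw [Metric.NonemptyCompacts.dist_eq, hFT u, hFT w]
      calc Metric.hausdorffDist ((F u : Set ℝ) * (T u : Set ℝ)) ((F w : Set ℝ) * (T w : Set ℝ))
          ≤ Metric.hausdorffDist ((F u : Set ℝ) * (T u : Set ℝ)) ((F w : Set ℝ) * (T u : Set ℝ))
            + Metric.hausdorffDist ((F w : Set ℝ) * (T u : Set ℝ)) ((F w : Set ℝ) * (T w : Set ℝ)) :=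
            Metric.hausdorffDist_triangle hfin
        _ ≤ (M - 1) * |u - w| + M * dist (T u) (T w) := add_le_add h1 h2
    nlinarith
  -- surjectivity / image description
  have himg : {p : ℝ × NonemptyCompacts ℝ | ∃ u ∈ Icc (0 : ℝ) 1, p = (u, FT u)}
      = (fun p : ℝ × NonemptyCompacts ℝ => (p.1, FT p.1)) ''
          {p : ℝ × NonemptyCompacts ℝ | ∃ u ∈ Icc (0 : ℝ) 1, p = (u, T u)} := by
    ext p
    constructor
    · rintro ⟨u, hu, rfl⟩
      exact ⟨(u, T u), ⟨u, hu, rfl⟩, rfl⟩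
    · rintro ⟨q, ⟨u, hu, rfl⟩, rfl⟩
      exact ⟨u, hu, rfl⟩
  refine ⟨himg, key, ?_⟩
  rw [himg]
  have hlip : LipschitzOnWith (Real.toNNReal (2 * M))
      (fun p : ℝ × NonemptyCompacts ℝ => (p.1, FT p.1))
      {p : ℝ × NonemptyCompacts ℝ | ∃ u ∈ Icc (0 : ℝ) 1, p = (u, T u)} := by
    apply LipschitzOnWith.of_dist_le_mul
    rintro x ⟨u, hu, rfl⟩ y ⟨w, hw, rfl⟩
    have hK : (Real.toNNReal (2 * M) : ℝ) = 2 * M := Real.coe_toNNReal _ (by linarith)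
    rw [hK]
    have hd1 : dist ((u, FT u) : ℝ × NonemptyCompacts ℝ) (w, FT w)
        = max (dist u w) (dist (FT u) (FT w)) := Prod.dist_eq
    have hd2 : dist ((u, T u) : ℝ × NonemptyCompacts ℝ) (w, T w)
        = max (dist u w) (dist (T u) (T w)) := Prod.dist_eq
    have hkey := key u hu w hw
    have huw : dist u w = |u - w| := Real.dist_eq u w
    rw [hd1, hd2, huw]
    have h1 : |u - w| ≤ max |u - w| (dist (T u) (T w)) := le_max_left _ _
    have h2 : dist (T u) (T w) ≤ max |u - w| (dist (T u) (T w)) := le_max_right _ _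
    have hM0 : (0:ℝ) ≤ M := by linarith
    have hstep : M * (|u - w| + dist (T u) (T w)) ≤ 2 * M * max |u - w| (dist (T u) (T w)) := by
      have := mul_le_mul_of_nonneg_left (add_le_add h1 h2) hM0
      linarith
    apply max_le
    · calc |u - w| ≤ M * (|u - w| + dist (T u) (T w)) := by
            nlinarith [dist_nonneg (x := T u) (y := T w),
              mul_nonneg (sub_nonneg.2 hM) (abs_nonneg (u - w))]
        _ ≤ 2 * M * max |u - w| (dist (T u) (T w)) := hstep
    · calc dist (FT u) (FT w) ≤ M * (|u - w| + dist (T u) (T w)) := by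
            nlinarith [abs_nonneg (u - w)]
        _ ≤ 2 * M * max |u - w| (dist (T u) (T w)) := hstep
  exact hlip.dimH_image_le
end

section
/- Define 𝔡 : (I × 𝒦_c(ℝ))² → [0,∞) by 𝔡((u,A),(w,B)) = |u − w| + H(A + G(w), B + G(u)), where G : I → 𝒦_c(ℝ) is a fixed continuous set-valued map and + denotes Minkowski sum. Then 𝔡 is a metric and (I × 𝒦_c(ℝ), 𝔡) is a complete metric space. -/
open Set Pointwise TopologicalSpace Filter

/-- The distance `𝔡((u,A),(w,B)) = |u − w| + H(A + G(w), B + G(u))` on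
`I × 𝒦_c(ℝ)` (with `G : I → 𝒦_c(ℝ)` a fixed continuous map into nonempty compact
convex subsets of `ℝ`, and `+` the Minkowski sum). -/
noncomputable def frakd {a b : ℝ} (G : Icc a b → NonemptyCompacts ℝ)
    (p q : Icc a b × {A : NonemptyCompacts ℝ // Convex ℝ (A : Set ℝ)}) : ℝ :=
  |p.1.val - q.1.val| +
    Metric.hausdorffDist ((p.2.val : Set ℝ) + (G q.1 : Set ℝ))
      ((q.2.val : Set ℝ) + (G p.1 : Set ℝ))

section Aux

open Metric

/-- Minkowski sum of two real closed intervals. -/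
lemma myIcc_add_Icc {a b c d : ℝ} (hab : a ≤ b) (hcd : c ≤ d) :
    Icc a b + Icc c d = Icc (a + c) (b + d) := by
  apply Subset.antisymm (Icc_add_Icc_subset a b c d)
  intro x hx
  refine ⟨max a (x - d), ⟨le_max_left _ _, max_le hab (by linarith [hx.2])⟩,
    x - max a (x - d), ⟨?_, ?_⟩, by ring⟩
  · rcases max_cases a (x - d) with ⟨h, _⟩ | ⟨h, _⟩ <;> rw [h] <;> linarith [hx.1, hx.2]
  · have := le_max_right a (x - d); linarith

/-- A nonempty compact convex subset of `ℝ` is a closed interval. -/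
lemma eq_Icc_of_cc {s : Set ℝ} (hconv : Convex ℝ s) (hcomp : IsCompact s)
    (hne : s.Nonempty) : s = Icc (sInf s) (sSup s) :=
  eq_Icc_of_connected_compact ⟨hne, hconv.isPreconnected⟩ hcomp

lemma sInf_le_sSup_of_cc {s : Set ℝ} (hcomp : IsCompact s) (hne : s.Nonempty) :
    sInf s ≤ sSup s :=
  Real.sInf_le_sSup s hcomp.bddBelow hcomp.bddAbove

lemma hausdorffDist_Icc_le {p q p' q' : ℝ} (h : p ≤ q) (h' : p' ≤ q') :
    hausdorffDist (Icc p q) (Icc p' q') ≤ max |p - p'| |q - q'| := by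
  have key : ∀ p q p' q' : ℝ, p ≤ q → p' ≤ q' → ∀ x ∈ Icc p q,
      ∃ y ∈ Icc p' q', dist x y ≤ max |p - p'| |q - q'| := by
    intro p q p' q' h h' x hx
    refine ⟨max p' (min x q'), ⟨le_max_left _ _, max_le h' (min_le_right _ _)⟩, ?_⟩
    rcases le_total x p' with hxp | hxp
    · have hy : max p' (min x q') = p' := max_eq_left (min_le_of_left_le hxp)
      rw [hy, Real.dist_eq]
      refine le_max_of_le_left ?_
      rw [abs_of_nonpos (by linarith)]
      calc -(x - p') = p' - x := by ring
        _ ≤ p' - p := by linarith [hx.1]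
        _ ≤ |p - p'| := by rw [abs_sub_comm]; exact le_abs_self _
    · rcases le_total x q' with h1 | h1
      · rw [min_eq_left h1, max_eq_right hxp, dist_self]
        positivity
      · rw [min_eq_right h1, max_eq_right h', Real.dist_eq]
        refine le_max_of_le_right ?_
        rw [abs_of_nonneg (by linarith)]
        calc x - q' ≤ q - q' := by linarith [hx.2]
          _ ≤ |q - q'| := le_abs_self _
  refine hausdorffDist_le_of_mem_dist
    (le_trans (abs_nonneg _) (le_max_left _ _)) (key _ _ _ _ h h') ?_
  intro x hx
  obtain ⟨y, hy, hd⟩ := key p' q' p q h' h x hx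
  refine ⟨y, hy, le_trans hd ?_⟩
  rw [abs_sub_comm p' p, abs_sub_comm q' q]

lemma le_hausdorffDist_Icc {p q p' q' : ℝ} (h : p ≤ q) (h' : p' ≤ q') :
    max |p - p'| |q - q'| ≤ hausdorffDist (Icc p q) (Icc p' q') := by
  have key1 : ∀ p q p' q' : ℝ, p ≤ q → p' ≤ q' →
      p - p' ≤ hausdorffDist (Icc p q) (Icc p' q') := by
    intro p q p' q' h h'
    rcases le_total p p' with hle | hle
    · linarith [hausdorffDist_nonneg (s := Icc p q) (t := Icc p' q')]
    · have hfin := hausdorffEdist_ne_top_of_nonempty_of_bounded (nonempty_Icc.2 h')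
        (nonempty_Icc.2 h) isCompact_Icc.isBounded isCompact_Icc.isBounded
      have h1 : p - p' ≤ infDist p' (Icc p q) := by
        by_contra hc
        push_neg at hc
        obtain ⟨y, hy, hdy⟩ := (infDist_lt_iff (nonempty_Icc.2 h)).1 hc
        rw [Real.dist_eq, abs_of_nonpos (by linarith [hy.1])] at hdy
        linarith [hy.1]
      calc p - p' ≤ infDist p' (Icc p q) := h1
        _ ≤ hausdorffDist (Icc p' q') (Icc p q) :=
          infDist_le_hausdorffDist_of_mem (left_mem_Icc.2 h') hfin
        _ = hausdorffDist (Icc p q) (Icc p' q') := hausdorffDist_comm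
  have key2 : ∀ p q p' q' : ℝ, p ≤ q → p' ≤ q' →
      q - q' ≤ hausdorffDist (Icc p q) (Icc p' q') := by
    intro p q p' q' h h'
    rcases le_total q q' with hle | hle
    · linarith [hausdorffDist_nonneg (s := Icc p q) (t := Icc p' q')]
    · have hfin := hausdorffEdist_ne_top_of_nonempty_of_bounded (nonempty_Icc.2 h)
        (nonempty_Icc.2 h') isCompact_Icc.isBounded isCompact_Icc.isBounded
      have h1 : q - q' ≤ infDist q (Icc p' q') := by
        by_contra hc
        push_neg at hc
        obtain ⟨y, hy, hdy⟩ := (infDist_lt_iff (nonempty_Icc.2 h')).1 hc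
        rw [Real.dist_eq, abs_of_nonneg (by linarith [hy.2])] at hdy
        linarith [hy.2]
      exact le_trans h1 (infDist_le_hausdorffDist_of_mem (right_mem_Icc.2 h) hfin)
  have hcomm : hausdorffDist (Icc p' q') (Icc p q) = hausdorffDist (Icc p q) (Icc p' q') :=
    hausdorffDist_comm
  refine max_le ?_ ?_
  · rcases abs_cases (p - p') with ⟨he, _⟩ | ⟨he, _⟩
    · rw [he]; exact key1 p q p' q' h h'
    · rw [he]
      have := key1 p' q' p q h' h
      rw [hcomm] at this; linarith
  · rcases abs_cases (q - q') with ⟨he, _⟩ | ⟨he, _⟩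
    · rw [he]; exact key2 p q p' q' h h'
    · rw [he]
      have := key2 p' q' p q h' h
      rw [hcomm] at this; linarith

lemma hausdorffDist_Icc_eq {p q p' q' : ℝ} (h : p ≤ q) (h' : p' ≤ q') :
    hausdorffDist (Icc p q) (Icc p' q') = max |p - p'| |q - q'| :=
  le_antisymm (hausdorffDist_Icc_le h h') (le_hausdorffDist_Icc h h')

/-- The fundamental formula for `frakd` in terms of interval endpoints. -/
lemma frakd_eq {a b : ℝ} (G : Icc a b → NonemptyCompacts ℝ)
    (hGconv : ∀ x, Convex ℝ (G x : Set ℝ))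
    (p q : Icc a b × {A : NonemptyCompacts ℝ // Convex ℝ (A : Set ℝ)}) :
    frakd G p q = |p.1.val - q.1.val| +
      max |(sInf (p.2.val : Set ℝ) - sInf (G p.1 : Set ℝ)) -
            (sInf (q.2.val : Set ℝ) - sInf (G q.1 : Set ℝ))|
          |(sSup (p.2.val : Set ℝ) - sSup (G p.1 : Set ℝ)) -
            (sSup (q.2.val : Set ℝ) - sSup (G q.1 : Set ℝ))| := by
  have hA := eq_Icc_of_cc p.2.2 p.2.1.isCompact p.2.1.nonempty
  have hB := eq_Icc_of_cc q.2.2 q.2.1.isCompact q.2.1.nonempty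
  have hGp := eq_Icc_of_cc (hGconv p.1) (G p.1).isCompact (G p.1).nonempty
  have hGq := eq_Icc_of_cc (hGconv q.1) (G q.1).isCompact (G q.1).nonempty
  have hA' := sInf_le_sSup_of_cc p.2.1.isCompact p.2.1.nonempty
  have hB' := sInf_le_sSup_of_cc q.2.1.isCompact q.2.1.nonempty
  have hGp' := sInf_le_sSup_of_cc (G p.1).isCompact (G p.1).nonempty
  have hGq' := sInf_le_sSup_of_cc (G q.1).isCompact (G q.1).nonempty
  rw [frakd]
  congr 1
  conv_lhs => rw [hA, hB, hGp, hGq]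
  rw [myIcc_add_Icc hA' hGq', myIcc_add_Icc hB' hGp',
    hausdorffDist_Icc_eq (add_le_add hA' hGq') (add_le_add hB' hGp')]
  congr 1 <;> ring

/-- Injectivity of the endpoint data. -/
lemma eq_of_endpoints {a b : ℝ} {G : Icc a b → NonemptyCompacts ℝ}
    (hGconv : ∀ x, Convex ℝ (G x : Set ℝ))
    {p q : Icc a b × {A : NonemptyCompacts ℝ // Convex ℝ (A : Set ℝ)}}
    (h1 : p.1 = q.1)
    (h2 : sInf (p.2.val : Set ℝ) - sInf (G p.1 : Set ℝ)
        = sInf (q.2.val : Set ℝ) - sInf (G q.1 : Set ℝ))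
    (h3 : sSup (p.2.val : Set ℝ) - sSup (G p.1 : Set ℝ)
        = sSup (q.2.val : Set ℝ) - sSup (G q.1 : Set ℝ)) : p = q := by
  have hA := eq_Icc_of_cc p.2.2 p.2.1.isCompact p.2.1.nonempty
  have hB := eq_Icc_of_cc q.2.2 q.2.1.isCompact q.2.1.nonempty
  rw [h1] at h2 h3
  have hi : sInf (p.2.val : Set ℝ) = sInf (q.2.val : Set ℝ) := by linarith
  have hs : sSup (p.2.val : Set ℝ) = sSup (q.2.val : Set ℝ) := by linarith
  have hset : (p.2.val : Set ℝ) = (q.2.val : Set ℝ) := by rw [hA, hB, hi, hs]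
  exact Prod.ext h1 (Subtype.ext (NonemptyCompacts.ext hset))

end Aux

/-- `𝔡` is a metric on `I × 𝒦_c(ℝ)` and this space is complete with respect to it:
`𝔡` is symmetric, vanishes exactly on the diagonal, satisfies the triangle inequality,
and every `𝔡`-Cauchy sequence `𝔡`-converges to some point. -/
theorem frakd_metric_and_complete (a b : ℝ) (hab : a ≤ b)
    (G : Icc a b → NonemptyCompacts ℝ) (hGcont : Continuous G)
    (hGconv : ∀ x, Convex ℝ (G x : Set ℝ)) :
    (∀ p q, frakd G p q = 0 ↔ p = q) ∧
    (∀ p q, frakd G p q = frakd G q p) ∧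
    (∀ p q r, frakd G p r ≤ frakd G p q + frakd G q r) ∧
    (∀ x : ℕ → Icc a b × {A : NonemptyCompacts ℝ // Convex ℝ (A : Set ℝ)},
      (∀ ε : ℝ, 0 < ε → ∃ N, ∀ m ≥ N, ∀ n ≥ N, frakd G (x m) (x n) < ε) →
      ∃ p, Tendsto (fun n => frakd G (x n) p) atTop (nhds 0)) := by
  set I := fun (p : Icc a b × {A : NonemptyCompacts ℝ // Convex ℝ (A : Set ℝ)}) =>
    sInf (p.2.val : Set ℝ) - sInf (G p.1 : Set ℝ) with hIdef
  set S := fun (p : Icc a b × {A : NonemptyCompacts ℝ // Convex ℝ (A : Set ℝ)}) =>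
    sSup (p.2.val : Set ℝ) - sSup (G p.1 : Set ℝ) with hSdef
  have hfe : ∀ p q, frakd G p q = |p.1.val - q.1.val| + max |I p - I q| |S p - S q| :=
    fun p q => frakd_eq G hGconv p q
  refine ⟨?_, ?_, ?_, ?_⟩
  · -- zero iff eq
    intro p q
    rw [hfe]
    constructor
    · intro h
      have h3 := abs_nonneg (I p - I q)
      have h4 := abs_nonneg (S p - S q)
      have h5 := le_max_left |I p - I q| |S p - S q|
      have h6 := le_max_right |I p - I q| |S p - S q|
      have h7 := abs_nonneg (p.1.val - q.1.val)
      have hmax : (0:ℝ) ≤ max |I p - I q| |S p - S q| := le_trans h3 h5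
      have ha1 : |p.1.val - q.1.val| = 0 := by linarith
      have hI1 : |I p - I q| = 0 := by
        have : max |I p - I q| |S p - S q| = 0 := by linarith
        exact le_antisymm (this ▸ h5) h3
      have hS1 : |S p - S q| = 0 := by
        have : max |I p - I q| |S p - S q| = 0 := by linarith
        exact le_antisymm (this ▸ h6) h4
      refine eq_of_endpoints hGconv
        (Subtype.ext (by have := abs_eq_zero.1 ha1; linarith)) ?_ ?_
      · have := abs_eq_zero.1 hI1
        simp only [hIdef] at this
        linarith
      · have := abs_eq_zero.1 hS1
        simp only [hSdef] at this
        linarith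
    · rintro rfl
      simp
  · -- symmetry
    intro p q
    rw [hfe, hfe]
    congr 1
    · exact abs_sub_comm _ _
    · congr 1 <;> exact abs_sub_comm _ _
  · -- triangle
    intro p q r
    rw [hfe, hfe, hfe]
    have h1 : |p.1.val - r.1.val| ≤ |p.1.val - q.1.val| + |q.1.val - r.1.val| :=
      abs_sub_le _ _ _
    have h2 : max |I p - I r| |S p - S r| ≤
        max |I p - I q| |S p - S q| + max |I q - I r| |S q - S r| := by
      refine max_le ?_ ?_
      · exact le_trans (abs_sub_le _ _ _)
          (add_le_add (le_max_left _ _) (le_max_left _ _))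
      · exact le_trans (abs_sub_le _ _ _)
          (add_le_add (le_max_right _ _) (le_max_right _ _))
    linarith
  · -- completeness
    intro x hx
    have hb : ∀ m n, |(x m).1.val - (x n).1.val| ≤ frakd G (x m) (x n) ∧
        |I (x m) - I (x n)| ≤ frakd G (x m) (x n) ∧
        |S (x m) - S (x n)| ≤ frakd G (x m) (x n) := by
      intro m n
      rw [hfe]
      have h2 := le_max_left |I (x m) - I (x n)| |S (x m) - S (x n)|
      have h3 := abs_nonneg (I (x m) - I (x n))
      have h4 := le_max_right |I (x m) - I (x n)| |S (x m) - S (x n)|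
      have h5 := abs_nonneg ((x m).1.val - (x n).1.val)
      exact ⟨by linarith, by linarith, by linarith⟩
    have hcauchy : ∀ f : (Icc a b × {A : NonemptyCompacts ℝ // Convex ℝ (A : Set ℝ)}) → ℝ,
        (∀ m n, |f (x m) - f (x n)| ≤ frakd G (x m) (x n)) →
        ∃ l : ℝ, Tendsto (fun n => f (x n)) atTop (nhds l) := by
      intro f hf
      have : CauchySeq (fun n => f (x n)) := by
        rw [Metric.cauchySeq_iff]
        intro ε hε
        obtain ⟨N, hN⟩ := hx ε hε
        exact ⟨N, fun m hm n hn => lt_of_le_of_lt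
          (by rw [Real.dist_eq]; exact hf m n) (hN m hm n hn)⟩
      exact cauchySeq_tendsto_of_complete this
    obtain ⟨u, hu⟩ := hcauchy (fun p => p.1.val) (fun m n => (hb m n).1)
    obtain ⟨i, hi⟩ := hcauchy I (fun m n => (hb m n).2.1)
    obtain ⟨s, hs⟩ := hcauchy S (fun m n => (hb m n).2.2)
    have humem : u ∈ Icc a b :=
      isClosed_Icc.mem_of_tendsto hu (Eventually.of_forall fun n => (x n).1.2)
    set u' : Icc a b := ⟨u, humem⟩ with hu'def
    have hxu : Tendsto (fun n => (x n).1) atTop (nhds u') := by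
      exact tendsto_subtype_rng.mpr hu
    have hGx : Tendsto (fun n => G (x n).1) atTop (nhds (G u')) :=
      (hGcont.tendsto u').comp hxu
    have hdist0 : Tendsto (fun n => dist (G (x n).1) (G u')) atTop (nhds 0) :=
      tendsto_iff_dist_tendsto_zero.1 hGx
    have hend : ∀ X Y : NonemptyCompacts ℝ, Convex ℝ (X : Set ℝ) → Convex ℝ (Y : Set ℝ) →
        max |sInf (X : Set ℝ) - sInf (Y : Set ℝ)| |sSup (X : Set ℝ) - sSup (Y : Set ℝ)|
          ≤ dist X Y := by
      intro X Y hX hY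
      rw [Metric.NonemptyCompacts.dist_eq]
      have h1 := eq_Icc_of_cc hX X.isCompact X.nonempty
      have h2 := eq_Icc_of_cc hY Y.isCompact Y.nonempty
      calc max |sInf (X : Set ℝ) - sInf (Y : Set ℝ)|
            |sSup (X : Set ℝ) - sSup (Y : Set ℝ)|
          ≤ Metric.hausdorffDist (Icc (sInf (X : Set ℝ)) (sSup (X : Set ℝ)))
            (Icc (sInf (Y : Set ℝ)) (sSup (Y : Set ℝ))) :=
            le_hausdorffDist_Icc (sInf_le_sSup_of_cc X.isCompact X.nonempty)
              (sInf_le_sSup_of_cc Y.isCompact Y.nonempty)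
        _ = Metric.hausdorffDist (X : Set ℝ) (Y : Set ℝ) := by rw [← h1, ← h2]
    have hInfG : Tendsto (fun n => sInf (G (x n).1 : Set ℝ)) atTop
        (nhds (sInf (G u' : Set ℝ))) := by
      rw [tendsto_iff_dist_tendsto_zero]
      refine squeeze_zero (fun n => dist_nonneg) (fun n => ?_) hdist0
      rw [Real.dist_eq]
      exact le_trans (le_max_left _ _) (hend _ _ (hGconv _) (hGconv _))
    have hSupG : Tendsto (fun n => sSup (G (x n).1 : Set ℝ)) atTop
        (nhds (sSup (G u' : Set ℝ))) := by
      rw [tendsto_iff_dist_tendsto_zero]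
      refine squeeze_zero (fun n => dist_nonneg) (fun n => ?_) hdist0
      rw [Real.dist_eq]
      exact le_trans (le_max_right _ _) (hend _ _ (hGconv _) (hGconv _))
    set l := i + sInf (G u' : Set ℝ) with hldef
    set r := s + sSup (G u' : Set ℝ) with hrdef
    have hlr : l ≤ r := by
      refine le_of_tendsto_of_tendsto' (hi.add hInfG) (hs.add hSupG) (fun n => ?_)
      have h1 : I (x n) + sInf (G (x n).1 : Set ℝ) = sInf ((x n).2.val : Set ℝ) := by
        simp [hIdef]
      have h2 : S (x n) + sSup (G (x n).1 : Set ℝ) = sSup ((x n).2.val : Set ℝ) := by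
        simp [hSdef]
      rw [h1, h2]
      exact sInf_le_sSup_of_cc (x n).2.1.isCompact (x n).2.1.nonempty
    set A : NonemptyCompacts ℝ := ⟨⟨Icc l r, isCompact_Icc⟩, nonempty_Icc.2 hlr⟩ with hAdef
    have hAconv : Convex ℝ (A : Set ℝ) := convex_Icc l r
    set p : Icc a b × {A : NonemptyCompacts ℝ // Convex ℝ (A : Set ℝ)} :=
      (u', ⟨A, hAconv⟩) with hpdef
    have hIp : I p = i := by
      have hAi : sInf (A : Set ℝ) = l := by
        show sInf (Icc l r) = l
        exact csInf_Icc hlr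
      simp only [hIdef, hpdef]
      rw [hAi, hldef]
      ring
    have hSp : S p = s := by
      have hAs : sSup (A : Set ℝ) = r := by
        show sSup (Icc l r) = r
        exact csSup_Icc hlr
      simp only [hSdef, hpdef]
      rw [hAs, hrdef]
      ring
    refine ⟨p, ?_⟩
    have hform : ∀ n, frakd G (x n) p =
        |(x n).1.val - u| + max |I (x n) - i| |S (x n) - s| := by
      intro n
      rw [hfe, hIp, hSp]
    have hlim : Tendsto (fun n => |(x n).1.val - u| + max |I (x n) - i| |S (x n) - s|)
        atTop (nhds (|u - u| + max |i - i| |s - s|)) :=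
      ((hu.sub_const u).abs).add (((hi.sub_const i).abs).max ((hs.sub_const s).abs))
    simp only [sub_self, abs_zero, max_self, add_zero] at hlim
    exact Tendsto.congr (fun n => (hform n).symm) hlim
end

section
/- With the notation of the set-valued α-fractal function: the fractal operator 𝓕^α_S : C(I, 𝒦(ℝ)) → C(I, 𝒦(ℝ)) defined by 𝓕^α_S(F) = F^α satisfies sup_{x∈I} H(F^α_n(x), F^α(x)) ≤ (1/(1−|α|))·sup_{x∈I} H(F_n(x), F(x)) whenever F_n → F uniformly; in particular 𝓕^α_S is continuous (indeed Lipschitz with constant 1/(1−|α|)) with respect to the sup-Hausdorff metric. -/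
open Set Pointwise TopologicalSpace
open Metric

private lemma haus_fin {s t : Set ℝ} (hs : IsCompact s) (hsne : s.Nonempty)
    (ht : IsCompact t) (htne : t.Nonempty) :
    EMetric.hausdorffEdist s t ≠ ⊤ :=
  hausdorffEdist_ne_top_of_nonempty_of_bounded hsne htne hs.isBounded ht.isBounded

private lemma haus_add {s s' t t' : Set ℝ}
    (hs : IsCompact s) (hsne : s.Nonempty) (hs' : IsCompact s') (hs'ne : s'.Nonempty)
    (ht : IsCompact t) (htne : t.Nonempty) (ht' : IsCompact t') (ht'ne : t'.Nonempty) :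
    hausdorffDist (s + t) (s' + t') ≤ hausdorffDist s s' + hausdorffDist t t' := by
  apply hausdorffDist_le_of_mem_dist (by have := @hausdorffDist_nonneg ℝ _ s s'; have := @hausdorffDist_nonneg ℝ _ t t'; linarith)
  · rintro x ⟨a, ha, b, hb, rfl⟩
    obtain ⟨a', ha', haa'⟩ := hs'.exists_infDist_eq_dist hs'ne a
    obtain ⟨b', hb', hbb'⟩ := ht'.exists_infDist_eq_dist ht'ne b
    refine ⟨a' + b', add_mem_add ha' hb', (dist_add_add_le _ _ _ _).trans ?_⟩
    have h1 : dist a a' ≤ hausdorffDist s s' := by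
      rw [← haa']; exact infDist_le_hausdorffDist_of_mem ha (haus_fin hs hsne hs' hs'ne)
    have h2 : dist b b' ≤ hausdorffDist t t' := by
      rw [← hbb']; exact infDist_le_hausdorffDist_of_mem hb (haus_fin ht htne ht' ht'ne)
    linarith
  · rintro x ⟨a, ha, b, hb, rfl⟩
    obtain ⟨a', ha', haa'⟩ := hs.exists_infDist_eq_dist hsne a
    obtain ⟨b', hb', hbb'⟩ := ht.exists_infDist_eq_dist htne b
    refine ⟨a' + b', add_mem_add ha' hb', (dist_add_add_le _ _ _ _).trans ?_⟩
    have h1 : dist a a' ≤ hausdorffDist s s' := by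
      rw [← haa', hausdorffDist_comm]
      exact infDist_le_hausdorffDist_of_mem ha (haus_fin hs' hs'ne hs hsne)
    have h2 : dist b b' ≤ hausdorffDist t t' := by
      rw [← hbb', hausdorffDist_comm]
      exact infDist_le_hausdorffDist_of_mem hb (haus_fin ht' ht'ne ht htne)
    linarith

private lemma haus_smul (α : ℝ) {s s' : Set ℝ}
    (hs : IsCompact s) (hsne : s.Nonempty) (hs' : IsCompact s') (hs'ne : s'.Nonempty) :
    hausdorffDist (α • s) (α • s') ≤ |α| * hausdorffDist s s' := by
  apply hausdorffDist_le_of_mem_dist (mul_nonneg (abs_nonneg α) hausdorffDist_nonneg)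
  · rintro x ⟨a, ha, rfl⟩
    obtain ⟨a', ha', haa'⟩ := hs'.exists_infDist_eq_dist hs'ne a
    refine ⟨α • a', smul_mem_smul_set ha', ?_⟩
    rw [dist_smul₀, Real.norm_eq_abs]
    have : dist a a' ≤ hausdorffDist s s' := by
      rw [← haa']; exact infDist_le_hausdorffDist_of_mem ha (haus_fin hs hsne hs' hs'ne)
    exact mul_le_mul_of_nonneg_left this (abs_nonneg α)
  · rintro x ⟨a, ha, rfl⟩
    obtain ⟨a', ha', haa'⟩ := hs.exists_infDist_eq_dist hsne a
    refine ⟨α • a', smul_mem_smul_set ha', ?_⟩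
    rw [dist_smul₀, Real.norm_eq_abs]
    have : dist a a' ≤ hausdorffDist s s' := by
      rw [← haa', hausdorffDist_comm]
      exact infDist_le_hausdorffDist_of_mem ha (haus_fin hs' hs'ne hs hsne)
    exact mul_le_mul_of_nonneg_left this (abs_nonneg α)

private lemma haus_sub {s s' t : Set ℝ}
    (hs : IsCompact s) (hsne : s.Nonempty) (hs' : IsCompact s') (hs'ne : s'.Nonempty)
    (ht : IsCompact t) (htne : t.Nonempty) :
    hausdorffDist (s - t) (s' - t) ≤ hausdorffDist s s' := by
  rw [sub_eq_add_neg s t, sub_eq_add_neg s' t]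
  have := haus_add hs hsne hs' hs'ne (ht.neg) (htne.neg) (ht.neg) (htne.neg)
  simpa [hausdorffDist_self_zero] using this

private lemma isCompact_sub {s t : Set ℝ} (hs : IsCompact s) (ht : IsCompact t) :
    IsCompact (s - t) := by
  rw [sub_eq_add_neg]; exact hs.add ht.neg

private lemma cover_lemma (N : ℕ) (hN : 2 ≤ N) (u : ℕ → ℝ)
    (x : ℝ) (hx : x ∈ Icc (u 0) (u (N - 1))) :
    ∃ n, n < N - 1 ∧ x ∈ Icc (u n) (u (n + 1)) := by
  classical
  set T := (Finset.range (N - 1)).filter (fun n => u n ≤ x) with hT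
  have h0 : (0 : ℕ) ∈ T := by
    simp only [hT, Finset.mem_filter, Finset.mem_range]
    exact ⟨by omega, hx.1⟩
  have hTne : T.Nonempty := ⟨0, h0⟩
  obtain ⟨m, hm, hmax⟩ := T.exists_max_image id hTne
  simp only [hT, Finset.mem_filter, Finset.mem_range] at hm
  refine ⟨m, hm.1, hm.2, ?_⟩
  by_contra h
  push_neg at h
  have hm1 : ¬ (m + 1 < N - 1) := by
    intro hlt
    have : m + 1 ∈ T := by
      simp only [hT, Finset.mem_filter, Finset.mem_range]
      exact ⟨hlt, le_of_lt h⟩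
    have h2 := hmax _ this
    simp only [id] at h2
    omega
  have : m + 1 = N - 1 := by omega
  rw [this] at h
  exact absurd hx.2 (not_le.mpr h)

/-- The fractal operator `F ↦ F^α` is Lipschitz with constant `1/(1−|α|)` for the
sup-Hausdorff metric (hence continuous): if `Fα`, `Gα` are the set-valued `α`-fractal
functions of `F`, `G` (with the same partition `u`, maps `Linv = L⁻¹`, base function `S`
and scaling `α`, `|α| < 1`), then
`sup_{x ∈ I} H(Fα(x), Gα(x)) ≤ (1/(1−|α|)) · sup_{y ∈ I} H(F(y), G(y))`. -/
theorem fractal_operator_lipschitz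
    (N : ℕ) (hN : 2 ≤ N) (u : ℕ → ℝ) (hu : ∀ n, n < N - 1 → u n < u (n + 1))
    (F G S Fα Gα : ℝ → NonemptyCompacts ℝ) (α : ℝ) (hα : |α| < 1)
    (hF : ContinuousOn F (Icc (u 0) (u (N - 1))))
    (hG : ContinuousOn G (Icc (u 0) (u (N - 1))))
    (hS : ContinuousOn S (Icc (u 0) (u (N - 1))))
    (hSF : (S (u 0) : Set ℝ) - (F (u 0) : Set ℝ)
         = (S (u (N - 1)) : Set ℝ) - (F (u (N - 1)) : Set ℝ))
    (hSG : (S (u 0) : Set ℝ) - (G (u 0) : Set ℝ)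
         = (S (u (N - 1)) : Set ℝ) - (G (u (N - 1)) : Set ℝ))
    (Linv : ℕ → ℝ → ℝ)
    (hLinv : ∀ n, n < N - 1 → ∀ y ∈ Icc (u n) (u (n + 1)),
        Linv n y ∈ Icc (u 0) (u (N - 1)))
    (hFα : ContinuousOn Fα (Icc (u 0) (u (N - 1))))
    (hGα : ContinuousOn Gα (Icc (u 0) (u (N - 1))))
    (hFαeq : ∀ n, n < N - 1 → ∀ x ∈ Icc (u n) (u (n + 1)),
        (Fα x : Set ℝ) = (F x : Set ℝ)
          + α • ((Fα (Linv n x) : Set ℝ) - (S (Linv n x) : Set ℝ)))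
    (hGαeq : ∀ n, n < N - 1 → ∀ x ∈ Icc (u n) (u (n + 1)),
        (Gα x : Set ℝ) = (G x : Set ℝ)
          + α • ((Gα (Linv n x) : Set ℝ) - (S (Linv n x) : Set ℝ))) :
    ∀ x ∈ Icc (u 0) (u (N - 1)),
      dist (Fα x) (Gα x) ≤ (1 / (1 - |α|)) * ⨆ y : Icc (u 0) (u (N - 1)), dist (F y) (G y) := by
  set I : Set ℝ := Icc (u 0) (u (N - 1)) with hI
  have hle : u 0 ≤ u (N - 1) := by
    have key : ∀ k, k ≤ N - 1 → u 0 ≤ u k := by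
      intro k
      induction k with
      | zero => intro _; exact le_refl _
      | succ k ih =>
        intro hk
        exact (ih (by omega)).trans (le_of_lt (hu k (by omega)))
    exact key (N - 1) le_rfl
  have hIne : I.Nonempty := nonempty_Icc.mpr hle
  haveI : Nonempty I := hIne.to_subtype
  have hIcomp : IsCompact I := isCompact_Icc
  -- the two sup functions and their bounds
  have hdFG : ContinuousOn (fun y => dist (F y) (G y)) I :=
    by exact Continuous.comp_continuousOn continuous_dist (ContinuousOn.prodMk hF hG)
  have hdFGα : ContinuousOn (fun y => dist (Fα y) (Gα y)) I :=
    by exact Continuous.comp_continuousOn continuous_dist (ContinuousOn.prodMk hFα hGα)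
  have bddD : BddAbove (Set.range fun y : I => dist (F y) (G y)) := by
    show BddAbove (Set.range (I.domRestrict fun y => dist (F y) (G y)))
    rw [Set.range_restrict]
    exact (hIcomp.image_of_continuousOn hdFG).bddAbove
  have bddM : BddAbove (Set.range fun y : I => dist (Fα y) (Gα y)) := by
    show BddAbove (Set.range (I.domRestrict fun y => dist (Fα y) (Gα y)))
    rw [Set.range_restrict]
    exact (hIcomp.image_of_continuousOn hdFGα).bddAbove
  set D : ℝ := ⨆ y : I, dist (F y) (G y) with hD
  set M : ℝ := ⨆ y : I, dist (Fα y) (Gα y) with hM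
  have hDle : ∀ y ∈ I, dist (F y) (G y) ≤ D := fun y hy =>
    le_ciSup bddD (⟨y, hy⟩ : I)
  have hMle : ∀ y ∈ I, dist (Fα y) (Gα y) ≤ M := fun y hy =>
    le_ciSup bddM (⟨y, hy⟩ : I)
  have hα1 : 0 < 1 - |α| := by linarith
  -- the key self-referential bound
  have key : M ≤ D + |α| * M := by
    refine ciSup_le fun ⟨x, hx⟩ => ?_
    obtain ⟨n, hn, hxn⟩ := cover_lemma N hN u x hx
    set y := Linv n x with hy
    have hyI : y ∈ I := hLinv n hn x hxn
    have e1 := hFαeq n hn x hxn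
    have e2 := hGαeq n hn x hxn
    -- data about the sets involved
    have cF : IsCompact (F x : Set ℝ) := (F x).isCompact
    have cG : IsCompact (G x : Set ℝ) := (G x).isCompact
    have cFs : IsCompact ((Fα y : Set ℝ) - (S y : Set ℝ)) :=
      isCompact_sub (Fα y).isCompact (S y).isCompact
    have cGs : IsCompact ((Gα y : Set ℝ) - (S y : Set ℝ)) :=
      isCompact_sub (Gα y).isCompact (S y).isCompact
    have nFs : ((Fα y : Set ℝ) - (S y : Set ℝ)).Nonempty := (Fα y).nonempty.sub (S y).nonempty
    have nGs : ((Gα y : Set ℝ) - (S y : Set ℝ)).Nonempty := (Gα y).nonempty.sub (S y).nonempty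
    calc dist (Fα x) (Gα x)
        = Metric.hausdorffDist (Fα x : Set ℝ) (Gα x : Set ℝ) := NonemptyCompacts.dist_eq
      _ = Metric.hausdorffDist
            ((F x : Set ℝ) + α • ((Fα y : Set ℝ) - (S y : Set ℝ)))
            ((G x : Set ℝ) + α • ((Gα y : Set ℝ) - (S y : Set ℝ))) := by rw [e1, e2]
      _ ≤ Metric.hausdorffDist (F x : Set ℝ) (G x : Set ℝ)
            + Metric.hausdorffDist (α • ((Fα y : Set ℝ) - (S y : Set ℝ)))
                (α • ((Gα y : Set ℝ) - (S y : Set ℝ))) :=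
          haus_add cF (F x).nonempty cG (G x).nonempty
            (cFs.smul α) (nFs.smul_set) (cGs.smul α) (nGs.smul_set)
      _ ≤ dist (F x) (G x)
            + |α| * Metric.hausdorffDist ((Fα y : Set ℝ) - (S y : Set ℝ))
                ((Gα y : Set ℝ) - (S y : Set ℝ)) := by
          rw [NonemptyCompacts.dist_eq]
          exact add_le_add le_rfl (haus_smul α cFs nFs cGs nGs)
      _ ≤ dist (F x) (G x) + |α| * dist (Fα y) (Gα y) := by
          rw [NonemptyCompacts.dist_eq]
          exact add_le_add le_rfl (mul_le_mul_of_nonneg_left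
            (haus_sub (Fα y).isCompact (Fα y).nonempty (Gα y).isCompact (Gα y).nonempty
              (S y).isCompact (S y).nonempty) (abs_nonneg α))
      _ ≤ D + |α| * M :=
          add_le_add (hDle x hx) (mul_le_mul_of_nonneg_left (hMle y hyI) (abs_nonneg α))
  intro x hx
  have h1 : dist (Fα x) (Gα x) ≤ M := hMle x hx
  have h2 : M ≤ D / (1 - |α|) := by
    rw [le_div_iff₀ hα1]
    nlinarith [abs_nonneg α]
  calc dist (Fα x) (Gα x) ≤ D / (1 - |α|) := h1.trans h2
    _ = (1 / (1 - |α|)) * D := by ring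
end

section
/- With the notation of the set-valued α-fractal function, the perturbation error between F and F^α satisfies ‖F^α − F‖_∞ ≤ (|α|/(1−|α|))·‖F − S‖_∞ + (2|α|/(1−|α|))·‖F‖_∞, where ‖G − H‖_∞ = sup_{u∈I} H(G(u), H(u)) and ‖G‖_∞ = sup_{u∈I} H(G(u), {0}). -/
open Set Pointwise TopologicalSpace

namespace FractalPerturbationAux

open Metric

lemma compact_sub {A B : Set ℝ} (hA : IsCompact A) (hB : IsCompact B) :
    IsCompact (A - B) := by
  rw [show A - B = (fun p : ℝ × ℝ => p.1 - p.2) '' (A ×ˢ B) by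
    rw [Set.image_prod]; rfl]
  exact (hA.prod hB).image (by fun_prop)

/-- From a point of `A`, find a point of `B` within Hausdorff distance. -/
lemma exists_close {A B : Set ℝ} (hA : IsCompact A) (hAne : A.Nonempty)
    (hB : IsCompact B) (hBne : B.Nonempty) {a : ℝ} (ha : a ∈ A) :
    ∃ b ∈ B, dist a b ≤ hausdorffDist A B := by
  obtain ⟨b, hbB, hb⟩ := hB.exists_infDist_eq_dist hBne a
  exact ⟨b, hbB, hb ▸ infDist_le_hausdorffDist_of_mem ha
    (hausdorffEdist_ne_top_of_nonempty_of_bounded hAne hBne hA.isBounded hB.isBounded)⟩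

lemma haus_add_le {A B A' B' : Set ℝ} (hA : IsCompact A) (hAne : A.Nonempty)
    (hB : IsCompact B) (hBne : B.Nonempty) (hA' : IsCompact A') (hA'ne : A'.Nonempty)
    (hB' : IsCompact B') (hB'ne : B'.Nonempty) :
    hausdorffDist (A + B) (A' + B') ≤ hausdorffDist A A' + hausdorffDist B B' := by
  apply hausdorffDist_le_of_mem_dist
    (add_nonneg hausdorffDist_nonneg hausdorffDist_nonneg)
  · rintro x ⟨a, ha, b, hb, rfl⟩
    obtain ⟨a', ha', hda⟩ := exists_close hA hAne hA' hA'ne ha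
    obtain ⟨b', hb', hdb⟩ := exists_close hB hBne hB' hB'ne hb
    refine ⟨a' + b', Set.add_mem_add ha' hb', ?_⟩
    calc dist (a + b) (a' + b') ≤ dist a a' + dist b b' := dist_add_add_le _ _ _ _
      _ ≤ _ := add_le_add hda hdb
  · rintro x ⟨a, ha, b, hb, rfl⟩
    obtain ⟨a', ha', hda⟩ := exists_close hA' hA'ne hA hAne ha
    obtain ⟨b', hb', hdb⟩ := exists_close hB' hB'ne hB hBne hb
    refine ⟨a' + b', Set.add_mem_add ha' hb', ?_⟩
    calc dist (a + b) (a' + b') ≤ dist a a' + dist b b' := dist_add_add_le _ _ _ _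
      _ ≤ hausdorffDist A' A + hausdorffDist B' B := add_le_add hda hdb
      _ = _ := by
        rw [show hausdorffDist A' A = hausdorffDist A A' from hausdorffDist_comm,
          show hausdorffDist B' B = hausdorffDist B B' from hausdorffDist_comm]

lemma haus_sub_le {A B A' B' : Set ℝ} (hA : IsCompact A) (hAne : A.Nonempty)
    (hB : IsCompact B) (hBne : B.Nonempty) (hA' : IsCompact A') (hA'ne : A'.Nonempty)
    (hB' : IsCompact B') (hB'ne : B'.Nonempty) :
    hausdorffDist (A - B) (A' - B') ≤ hausdorffDist A A' + hausdorffDist B B' := by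
  apply hausdorffDist_le_of_mem_dist
    (add_nonneg hausdorffDist_nonneg hausdorffDist_nonneg)
  · rintro x ⟨a, ha, b, hb, rfl⟩
    obtain ⟨a', ha', hda⟩ := exists_close hA hAne hA' hA'ne ha
    obtain ⟨b', hb', hdb⟩ := exists_close hB hBne hB' hB'ne hb
    refine ⟨a' - b', Set.sub_mem_sub ha' hb', ?_⟩
    calc dist (a - b) (a' - b') ≤ dist a a' + dist b b' := dist_sub_sub_le _ _ _ _
      _ ≤ _ := add_le_add hda hdb
  · rintro x ⟨a, ha, b, hb, rfl⟩
    obtain ⟨a', ha', hda⟩ := exists_close hA' hA'ne hA hAne ha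
    obtain ⟨b', hb', hdb⟩ := exists_close hB' hB'ne hB hBne hb
    refine ⟨a' - b', Set.sub_mem_sub ha' hb', ?_⟩
    calc dist (a - b) (a' - b') ≤ dist a a' + dist b b' := dist_sub_sub_le _ _ _ _
      _ ≤ hausdorffDist A' A + hausdorffDist B' B := add_le_add hda hdb
      _ = _ := by
        rw [show hausdorffDist A' A = hausdorffDist A A' from hausdorffDist_comm,
          show hausdorffDist B' B = hausdorffDist B B' from hausdorffDist_comm]

lemma haus_smul_le (c : ℝ) {A B : Set ℝ} (hA : IsCompact A) (hAne : A.Nonempty)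
    (hB : IsCompact B) (hBne : B.Nonempty) :
    hausdorffDist (c • A) (c • B) ≤ |c| * hausdorffDist A B := by
  apply hausdorffDist_le_of_mem_dist
    (mul_nonneg (abs_nonneg c) hausdorffDist_nonneg)
  · rintro x ⟨a, ha, rfl⟩
    obtain ⟨b, hb, hdb⟩ := exists_close hA hAne hB hBne ha
    refine ⟨c • b, Set.smul_mem_smul_set hb, ?_⟩
    rw [dist_smul₀]
    exact mul_le_mul_of_nonneg_left hdb (abs_nonneg c)
  · rintro x ⟨b, hb, rfl⟩
    obtain ⟨a, ha, hda⟩ := exists_close hB hBne hA hAne hb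
    refine ⟨c • a, Set.smul_mem_smul_set ha, ?_⟩
    rw [dist_smul₀]
    calc |c| * dist b a ≤ |c| * hausdorffDist B A :=
          mul_le_mul_of_nonneg_left hda (abs_nonneg c)
      _ = _ := by rw [show hausdorffDist B A = hausdorffDist A B from hausdorffDist_comm]

end FractalPerturbationAux

open FractalPerturbationAux Metric

/-- Perturbation error between `F` and its set-valued `α`-fractal function `Fα`:
`‖Fα − F‖_∞ ≤ (|α|/(1−|α|))·‖F − S‖_∞ + (2|α|/(1−|α|))·‖F‖_∞`, where
`‖G − H‖_∞ = sup_{y ∈ I} H(G(y), H(y))` and `‖G‖_∞ = sup_{y ∈ I} H(G(y), {0})`. -/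
theorem fractal_perturbation_error
    (N : ℕ) (hN : 2 ≤ N) (u : ℕ → ℝ) (hu : ∀ n, n < N - 1 → u n < u (n + 1))
    (F S Fα : ℝ → NonemptyCompacts ℝ) (α : ℝ) (hα : |α| < 1)
    (hF : ContinuousOn F (Icc (u 0) (u (N - 1))))
    (hS : ContinuousOn S (Icc (u 0) (u (N - 1))))
    (hSF : (S (u 0) : Set ℝ) - (F (u 0) : Set ℝ)
         = (S (u (N - 1)) : Set ℝ) - (F (u (N - 1)) : Set ℝ))
    (Linv : ℕ → ℝ → ℝ)
    (hLinv : ∀ n, n < N - 1 → ∀ y ∈ Icc (u n) (u (n + 1)),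
        Linv n y ∈ Icc (u 0) (u (N - 1)))
    (hFα : ContinuousOn Fα (Icc (u 0) (u (N - 1))))
    (hFαeq : ∀ n, n < N - 1 → ∀ x ∈ Icc (u n) (u (n + 1)),
        (Fα x : Set ℝ) = (F x : Set ℝ)
          + α • ((Fα (Linv n x) : Set ℝ) - (S (Linv n x) : Set ℝ))) :
    (⨆ y : Icc (u 0) (u (N - 1)), dist (Fα y) (F y))
      ≤ (|α| / (1 - |α|)) * (⨆ y : Icc (u 0) (u (N - 1)), dist (F y) (S y))
        + (2 * |α| / (1 - |α|)) *
            (⨆ y : Icc (u 0) (u (N - 1)),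
              Metric.hausdorffDist (F y : Set ℝ) ({0} : Set ℝ)) := by
  classical
  set I : Set ℝ := Icc (u 0) (u (N - 1)) with hIdef
  have h1pos : 0 < 1 - |α| := by linarith
  have humono : ∀ k, k ≤ N - 1 → u 0 ≤ u k := by
    intro k
    induction k with
    | zero => intro _; exact le_rfl
    | succ k ih =>
        intro hk
        have hk' : k < N - 1 := hk
        exact le_of_lt (lt_of_le_of_lt (ih (le_of_lt hk')) (hu k hk'))
  have h0N : u 0 ≤ u (N - 1) := humono _ le_rfl
  have hIne : I.Nonempty := nonempty_Icc.2 h0N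
  haveI : Nonempty I := hIne.to_subtype
  have hIc : IsCompact I := isCompact_Icc
  -- covering the interval by the subintervals
  have cover : ∀ x ∈ I, ∃ n, n < N - 1 ∧ x ∈ Icc (u n) (u (n + 1)) := by
    intro x hx
    set P : ℕ → Prop := fun m => u m ≤ x with hP
    have hP0 : P 0 := hx.1
    have hN2 : N - 2 < N - 1 := by omega
    refine ⟨Nat.findGreatest P (N - 2), lt_of_le_of_lt (Nat.findGreatest_le _) hN2,
      Nat.findGreatest_spec (Nat.zero_le _) hP0, ?_⟩
    by_cases hcase : Nat.findGreatest P (N - 2) = N - 2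
    · rw [hcase, show N - 2 + 1 = N - 1 by omega]
      exact hx.2
    · have hlt : Nat.findGreatest P (N - 2) + 1 ≤ N - 2 := by
        have := Nat.findGreatest_le (P := P) (n := N - 2); omega
      have hnot := Nat.findGreatest_is_greatest (P := P) (Nat.lt_succ_self _) hlt
      exact le_of_not_ge hnot
  -- boundedness of the suprema
  have hbdd : ∀ g : ℝ → ℝ, ContinuousOn g I →
      BddAbove (Set.range fun y : I => g y) := by
    intro g hg
    rw [show (Set.range fun y : I => g y) = g '' I from Set.range_restrict g I]
    exact (hIc.image_of_continuousOn hg).bddAbove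
  set Z : NonemptyCompacts ℝ := ⟨⟨{0}, isCompact_singleton⟩, Set.singleton_nonempty 0⟩
    with hZdef
  have hZeq : ∀ y : ℝ, hausdorffDist (F y : Set ℝ) ({0} : Set ℝ) = dist (F y) Z :=
    fun y => rfl
  have hdc : ∀ G H : ℝ → NonemptyCompacts ℝ, ContinuousOn G I → ContinuousOn H I →
      ContinuousOn (fun y => dist (G y) (H y)) I := fun G H hG hH =>
    continuous_dist.comp_continuousOn (hG.prodMk hH)
  have bddD : BddAbove (Set.range fun y : I => dist (Fα y) (F y)) :=
    hbdd _ (hdc _ _ hFα hF)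
  have bddM1 : BddAbove (Set.range fun y : I => dist (F y) (S y)) :=
    hbdd _ (hdc _ _ hF hS)
  have bddM2 : BddAbove (Set.range fun y : I =>
      hausdorffDist (F y : Set ℝ) ({0} : Set ℝ)) := by
    simp only [hZeq]
    exact hbdd _ (hdc _ _ hF continuousOn_const)
  set D := ⨆ y : I, dist (Fα y) (F y) with hDdef
  set M1 := ⨆ y : I, dist (F y) (S y) with hM1def
  set M2 := ⨆ y : I, hausdorffDist (F y : Set ℝ) ({0} : Set ℝ) with hM2def
  -- pointwise estimate
  have key : ∀ x ∈ I, dist (Fα x) (F x) ≤ |α| * (D + (M1 + 2 * M2)) := by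
    intro x hx
    obtain ⟨n, hn, hxn⟩ := cover x hx
    have hL : Linv n x ∈ I := hLinv n hn x hxn
    set L := Linv n x with hLdef
    set A : Set ℝ := (F x : Set ℝ) with hA
    set P : Set ℝ := (Fα L : Set ℝ) with hPset
    set Q : Set ℝ := (S L : Set ℝ) with hQset
    set R : Set ℝ := (F L : Set ℝ) with hRset
    have hAc : IsCompact A := (F x).isCompact
    have hAne : A.Nonempty := (F x).nonempty
    have hPc : IsCompact P := (Fα L).isCompact
    have hPne : P.Nonempty := (Fα L).nonempty
    have hQc : IsCompact Q := (S L).isCompact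
    have hQne : Q.Nonempty := (S L).nonempty
    have hRc : IsCompact R := (F L).isCompact
    have hRne : R.Nonempty := (F L).nonempty
    have hPQc : IsCompact (P - Q) := compact_sub hPc hQc
    have hPQne : (P - Q).Nonempty := hPne.sub hQne
    have hRQc : IsCompact (R - Q) := compact_sub hRc hQc
    have hRQne : (R - Q).Nonempty := hRne.sub hQne
    have hRRc : IsCompact (R - R) := compact_sub hRc hRc
    have hRRne : (R - R).Nonempty := hRne.sub hRne
    have h0c : IsCompact ({0} : Set ℝ) := isCompact_singleton
    have h0ne : ({0} : Set ℝ).Nonempty := Set.singleton_nonempty 0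
    have heq : (Fα x : Set ℝ) = A + α • (P - Q) := hFαeq n hn x hxn
    have e1 : dist (Fα x) (F x) = hausdorffDist (A + α • (P - Q)) (A + ({0} : Set ℝ)) := by
      rw [NonemptyCompacts.dist_eq, heq]
      congr 1
      simp [hA]
    have e2 : hausdorffDist (A + α • (P - Q)) (A + ({0} : Set ℝ)) ≤
        hausdorffDist A A + hausdorffDist (α • (P - Q)) ({0} : Set ℝ) :=
      haus_add_le hAc hAne (hPQc.smul α) hPQne.smul_set hAc hAne h0c h0ne
    rw [hausdorffDist_self_zero, zero_add] at e2
    have e3 : hausdorffDist (α • (P - Q)) ({0} : Set ℝ) ≤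
        |α| * hausdorffDist (P - Q) ({0} : Set ℝ) := by
      have h := haus_smul_le α hPQc hPQne h0c h0ne
      simpa [Set.smul_set_singleton] using h
    have fin1 : EMetric.hausdorffEdist (P - Q) (R - Q) ≠ ⊤ :=
      hausdorffEdist_ne_top_of_nonempty_of_bounded hPQne hRQne hPQc.isBounded hRQc.isBounded
    have fin2 : EMetric.hausdorffEdist (R - Q) (R - R) ≠ ⊤ :=
      hausdorffEdist_ne_top_of_nonempty_of_bounded hRQne hRRne hRQc.isBounded hRRc.isBounded
    have e4 : hausdorffDist (P - Q) ({0} : Set ℝ) ≤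
        hausdorffDist (P - Q) (R - Q) + hausdorffDist (R - Q) ({0} : Set ℝ) :=
      hausdorffDist_triangle fin1
    have e5 : hausdorffDist (P - Q) (R - Q) ≤ hausdorffDist P R + hausdorffDist Q Q :=
      haus_sub_le hPc hPne hQc hQne hRc hRne hQc hQne
    rw [hausdorffDist_self_zero, add_zero] at e5
    have e6 : hausdorffDist (R - Q) ({0} : Set ℝ) ≤
        hausdorffDist (R - Q) (R - R) + hausdorffDist (R - R) ({0} : Set ℝ) :=
      hausdorffDist_triangle fin2
    have e7 : hausdorffDist (R - Q) (R - R) ≤ hausdorffDist R R + hausdorffDist Q R :=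
      haus_sub_le hRc hRne hQc hQne hRc hRne hRc hRne
    rw [hausdorffDist_self_zero, zero_add] at e7
    have e8 : hausdorffDist (R - R) ({0} : Set ℝ) ≤
        hausdorffDist R ({0} : Set ℝ) + hausdorffDist R ({0} : Set ℝ) := by
      have h := haus_sub_le hRc hRne hRc hRne h0c h0ne h0c h0ne
      simpa using h
    -- bound the pieces by the suprema
    have bPR : hausdorffDist P R ≤ D := by
      have : dist (Fα L) (F L) ≤ D := le_ciSup bddD (⟨L, hL⟩ : I)
      exact this
    have bQR : hausdorffDist Q R ≤ M1 := by
      have h1 : hausdorffDist Q R = dist (F L) (S L) := by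
        rw [NonemptyCompacts.dist_eq]
        exact hausdorffDist_comm
      rw [h1]
      exact le_ciSup bddM1 (⟨L, hL⟩ : I)
    have bR0 : hausdorffDist R ({0} : Set ℝ) ≤ M2 := le_ciSup bddM2 (⟨L, hL⟩ : I)
    have hchain : hausdorffDist (P - Q) ({0} : Set ℝ) ≤ D + (M1 + 2 * M2) := by
      linarith
    calc dist (Fα x) (F x) ≤ |α| * hausdorffDist (P - Q) ({0} : Set ℝ) := by
          rw [e1]; exact e2.trans e3
      _ ≤ |α| * (D + (M1 + 2 * M2)) :=
          mul_le_mul_of_nonneg_left hchain (abs_nonneg α)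
  have hDle : D ≤ |α| * (D + (M1 + 2 * M2)) := ciSup_le fun y => key y y.2
  -- nonnegativity of the suprema
  obtain ⟨y0⟩ := ‹Nonempty I›
  have hD0 : 0 ≤ D := le_trans dist_nonneg (le_ciSup bddD y0)
  have hM10 : 0 ≤ M1 := le_trans dist_nonneg (le_ciSup bddM1 y0)
  have hM20 : 0 ≤ M2 := le_trans hausdorffDist_nonneg (le_ciSup bddM2 y0)
  have hmain : D * (1 - |α|) ≤ |α| * M1 + 2 * |α| * M2 := by nlinarith
  calc D ≤ (|α| * M1 + 2 * |α| * M2) / (1 - |α|) := (le_div_iff₀ h1pos).2 hmain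
    _ = |α| / (1 - |α|) * M1 + 2 * |α| / (1 - |α|) * M2 := by ring
end

section
/- Let β ≥ 1 and suppose 𝒮_β := {F ∈ C(I, 𝒦(ℝ)) : dim_H(𝒢(F)) = β} is nonempty and contains a map H with ‖H‖_∞ > 0. Then 𝒮_β is dense in C(I, 𝒦(ℝ)) with the sup-Hausdorff metric, assuming: (i) Lipschitz set-valued maps are dense in C(I, 𝒦(ℝ)), and (ii) for any Lipschitz G and any T, dim_H(𝒢(G + cT)) = dim_H(𝒢(cT)) = dim_H(𝒢(T)) for c > 0. -/
open Set Pointwise TopologicalSpace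
open scoped ENNReal NNReal

private lemma myInfEdist_add_le (p q : ℝ) (t v : Set ℝ) :
    EMetric.infEdist (p + q) (t + v) ≤ EMetric.infEdist p t + EMetric.infEdist q v := by
  have h1 : EMetric.infEdist p t + EMetric.infEdist q v
      = ⨅ y ∈ t, ⨅ z ∈ v, (edist p y + edist q z) := by
    simp only [EMetric.infEdist, Metric.infEDist, ENNReal.iInf_add, ENNReal.add_iInf]
    exact iInf₂_comm _
  rw [h1]
  simp only [le_iInf_iff]
  intro y hy z hz
  exact le_trans (EMetric.infEdist_le_edist_of_mem (Set.add_mem_add hy hz))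
    (edist_add_add_le _ _ _ _)

private lemma myHEdist_add (s t u v : Set ℝ) :
    EMetric.hausdorffEdist (s + u) (t + v)
      ≤ EMetric.hausdorffEdist s t + EMetric.hausdorffEdist u v := by
  apply EMetric.hausdorffEdist_le_of_infEdist
  · rintro x ⟨p, hp, q, hq, rfl⟩
    exact le_trans (myInfEdist_add_le p q t v)
      (add_le_add (EMetric.infEdist_le_hausdorffEdist_of_mem hp)
        (EMetric.infEdist_le_hausdorffEdist_of_mem hq))
  · rintro x ⟨p, hp, q, hq, rfl⟩
    rw [EMetric.hausdorffEdist, EMetric.hausdorffEdist_comm (s := s), EMetric.hausdorffEdist_comm (s := u)]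
    exact le_trans (myInfEdist_add_le p q s u)
      (add_le_add (EMetric.infEdist_le_hausdorffEdist_of_mem hp)
        (EMetric.infEdist_le_hausdorffEdist_of_mem hq))

private lemma myInfEdist_smul_le {c : ℝ} (hc : c ≠ 0) (p : ℝ) (B : Set ℝ) :
    EMetric.infEdist (c • p) (c • B) ≤ (‖c‖₊ : ℝ≥0∞) * EMetric.infEdist p B := by
  have h0 : (‖c‖₊ : ℝ≥0∞) ≠ 0 := by simpa using hc
  have h1 : (‖c‖₊ : ℝ≥0∞) * EMetric.infEdist p B
      = ⨅ y ∈ B, (‖c‖₊ : ℝ≥0∞) * edist p y := by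
    simp only [EMetric.infEdist, Metric.infEDist]
    rw [ENNReal.mul_iInf_of_ne h0 ENNReal.coe_ne_top]
    refine iInf_congr fun y => ?_
    rw [ENNReal.mul_iInf_of_ne h0 ENNReal.coe_ne_top]
  rw [h1]
  simp only [le_iInf_iff]
  intro y hy
  calc EMetric.infEdist (c • p) (c • B) ≤ edist (c • p) (c • y) :=
        EMetric.infEdist_le_edist_of_mem (Set.smul_mem_smul_set hy)
    _ = (‖c‖₊ : ℝ≥0∞) * edist p y := by rw [edist_smul₀]; rfl

private lemma myHEdist_smul {c : ℝ} (hc : c ≠ 0) (A B : Set ℝ) :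
    EMetric.hausdorffEdist (c • A) (c • B)
      ≤ (‖c‖₊ : ℝ≥0∞) * EMetric.hausdorffEdist A B := by
  apply EMetric.hausdorffEdist_le_of_infEdist
  · rintro x ⟨p, hp, rfl⟩
    exact le_trans (myInfEdist_smul_le hc p B)
      (mul_le_mul_right (EMetric.infEdist_le_hausdorffEdist_of_mem hp) _)
  · rintro x ⟨p, hp, rfl⟩
    rw [EMetric.hausdorffEdist, EMetric.hausdorffEdist_comm (s := A)]
    exact le_trans (myInfEdist_smul_le hc p A)
      (mul_le_mul_right (EMetric.infEdist_le_hausdorffEdist_of_mem hp) _)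

/-- Density of the class `𝒮_β = {F ∈ C(I, 𝒦(ℝ)) : dim_H 𝒢(F) = β}` in `C(I, 𝒦(ℝ))`
(sup-Hausdorff metric), for `β ≥ 1`, assuming: (i) Lipschitz set-valued maps are dense in
`C(I, 𝒦(ℝ))`; (ii) adding a Lipschitz map `G` to a positive multiple `c • T` does not
change the Hausdorff dimension of the graph: `dim_H 𝒢(G + c•T) = dim_H 𝒢(T)`; and that
`𝒮_β` contains a map `H` with `‖H‖_∞ > 0` (i.e. `H` is not identically `{0}`).
Here `𝒢(F) = {(u, F(u)) : u ∈ I}` in `I × 𝒦(ℝ)`. -/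
theorem dense_of_dim_level_set (a b : ℝ) (hab : a ≤ b) (β : ℝ≥0∞) (hβ : 1 ≤ β)
    (hdense : ∀ F : C(Icc a b, NonemptyCompacts ℝ), ∀ ε : ℝ, 0 < ε →
      ∃ G : C(Icc a b, NonemptyCompacts ℝ), (∃ K : NNReal, LipschitzWith K G) ∧ dist F G < ε)
    (hdim : ∀ G T GT : C(Icc a b, NonemptyCompacts ℝ), (∃ K : NNReal, LipschitzWith K G) →
      ∀ c : ℝ, 0 < c →
      (∀ x, (GT x : Set ℝ) = (G x : Set ℝ) + c • (T x : Set ℝ)) →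
      dimH {p : Icc a b × NonemptyCompacts ℝ | p.2 = GT p.1}
        = dimH {p : Icc a b × NonemptyCompacts ℝ | p.2 = T p.1})
    (hne : ∃ H : C(Icc a b, NonemptyCompacts ℝ),
      dimH {p : Icc a b × NonemptyCompacts ℝ | p.2 = H p.1} = β ∧
        ∃ x, (H x : Set ℝ) ≠ ({0} : Set ℝ)) :
    Dense {F : C(Icc a b, NonemptyCompacts ℝ) |
      dimH {p : Icc a b × NonemptyCompacts ℝ | p.2 = F p.1} = β} := by
  obtain ⟨H, hHdim, -⟩ := hne
  refine (Metric.dense_iff (α := C(Icc a b, NonemptyCompacts ℝ))).2 ?_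
  intro F ε hε
  -- a Lipschitz approximation of F
  obtain ⟨G, hGlip, hFG⟩ := hdense F (ε / 2) (by linarith)
  -- constant map at {0} and the sup bound M
  set H0 : NonemptyCompacts ℝ := ⟨⟨{0}, isCompact_singleton⟩, Set.singleton_nonempty 0⟩ with hH0
  set M : ℝ := dist (ContinuousMap.const (Icc a b) H0) H with hM
  have hM0 : 0 ≤ M := dist_nonneg
  set c : ℝ := ε / (2 * (M + 1)) with hc_def
  have hc : 0 < c := by positivity
  -- construct GT with GT x = G x + c • H x
  have hcompact : ∀ x : Icc a b, IsCompact ((G x : Set ℝ) + c • (H x : Set ℝ)) :=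
    fun x => (G x).isCompact.add ((H x).isCompact.smul c)
  have hnonempty : ∀ x : Icc a b, ((G x : Set ℝ) + c • (H x : Set ℝ)).Nonempty :=
    fun x => (G x).nonempty.add ((H x).nonempty.smul_set)
  set mk : NonemptyCompacts ℝ → NonemptyCompacts ℝ → NonemptyCompacts ℝ :=
    fun A B => ⟨⟨(A : Set ℝ) + c • (B : Set ℝ),
      A.isCompact.add (B.isCompact.smul c)⟩, A.nonempty.add (B.nonempty.smul_set)⟩ with hmk
  have hkey : ∀ A A' B B' : NonemptyCompacts ℝ,
      edist (mk A B) (mk A' B') ≤ edist A A' + (‖c‖₊ : ℝ≥0∞) * edist B B' := by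
    intro A A' B B'
    show EMetric.hausdorffEdist ((A : Set ℝ) + c • (B : Set ℝ))
        ((A' : Set ℝ) + c • (B' : Set ℝ)) ≤ _
    refine le_trans (myHEdist_add _ _ _ _) (add_le_add le_rfl ?_)
    exact myHEdist_smul hc.ne' _ _
  have hlips : LipschitzWith (1 + ‖c‖₊) fun p : NonemptyCompacts ℝ × NonemptyCompacts ℝ =>
      mk p.1 p.2 := by
    intro p q
    refine le_trans (hkey p.1 q.1 p.2 q.2) ?_
    have h1 : edist p.1 q.1 ≤ edist p q := by rw [Prod.edist_eq]; exact le_max_left _ _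
    have h2 : edist p.2 q.2 ≤ edist p q := by rw [Prod.edist_eq]; exact le_max_right _ _
    calc edist p.1 q.1 + (‖c‖₊ : ℝ≥0∞) * edist p.2 q.2
        ≤ edist p q + (‖c‖₊ : ℝ≥0∞) * edist p q := add_le_add h1 (mul_le_mul_right h2 _)
      _ = ((1 + ‖c‖₊ : ℝ≥0) : ℝ≥0∞) * edist p q := by
          push_cast; rw [add_mul, one_mul]
  set GT : C(Icc a b, NonemptyCompacts ℝ) :=
    ⟨fun x => mk (G x) (H x),
      hlips.continuous.comp (G.continuous.prodMk H.continuous)⟩ with hGT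
  -- dimension of the graph of GT
  have hdimGT : dimH {p : Icc a b × NonemptyCompacts ℝ | p.2 = GT p.1} = β := by
    rw [hdim G H GT hGlip c hc (fun x => rfl), hHdim]
  -- distance bound : dist G GT < ε / 2
  have hdistx : ∀ x : Icc a b, dist (G x) (GT x) ≤ c * M := by
    intro x
    have hed : edist (G x) (GT x) ≤ (‖c‖₊ : ℝ≥0∞) * edist H0 (H x) := by
      show EMetric.hausdorffEdist ((G x : Set ℝ)) ((G x : Set ℝ) + c • (H x : Set ℝ)) ≤ _
      have hz : (G x : Set ℝ) = (G x : Set ℝ) + c • ({0} : Set ℝ) := by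
        rw [Set.smul_set_singleton, smul_zero, Set.singleton_zero, add_zero]
      nth_rewrite 1 [hz]
      refine le_trans (myHEdist_add _ _ _ _) ?_
      rw [EMetric.hausdorffEdist, EMetric.hausdorffEdist_self, zero_add]
      exact myHEdist_smul hc.ne' _ _
    have hfin : (‖c‖₊ : ℝ≥0∞) * edist H0 (H x) ≠ ⊤ :=
      ENNReal.mul_ne_top ENNReal.coe_ne_top (edist_ne_top _ _)
    have hd : dist (G x) (GT x) ≤ c * dist H0 (H x) := by
      have := ENNReal.toReal_mono hfin hed
      rw [← dist_edist] at this
      refine le_trans this (le_of_eq ?_)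
      rw [ENNReal.toReal_mul, ← dist_edist, ENNReal.coe_toReal, coe_nnnorm,
        Real.norm_eq_abs, abs_of_pos hc]
    refine le_trans hd ?_
    have : dist H0 (H x) ≤ M := by
      have := ContinuousMap.dist_apply_le_dist (f := ContinuousMap.const (Icc a b) H0)
        (g := H) x
      simpa using this
    exact mul_le_mul_of_nonneg_left this hc.le
  have hcM : c * M < ε / 2 := by
    have h1 : c * M < c * (M + 1) := by
      have := mul_lt_mul_of_pos_left (lt_add_one M) hc
      linarith
    have h2 : c * (M + 1) = ε / 2 := by
      rw [hc_def]; field_simp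
    linarith
  have hGGT : dist G GT < ε / 2 := by
    rw [ContinuousMap.dist_lt_iff (by linarith)]
    intro x
    exact lt_of_le_of_lt (hdistx x) hcM
  refine ⟨GT, ?_, hdimGT⟩
  rw [Metric.mem_ball, dist_comm]
  calc dist F GT ≤ dist F G + dist G GT := dist_triangle _ _ _
    _ < ε / 2 + ε / 2 := add_lt_add hFG hGGT
    _ = ε := by ring
end
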